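/- arXiv:0908.3438 — 5 statements merged into one kernel-verified Lean document; each statement's English description precedes it below -/
import Mathlib

section
/- Let D be the 2^{2n} × (2n+2) design generated from G = (v, I_n), and let D′ be the half-fraction obtained by branching on a column associated with an entry 2 of v. Then D′ has exactly one complete word of length k_2 and exactly 2/ρ² partial words of length k_1 − 1 with aliasing index ρ, where k_1 = f_1 + 2f_2 + f_3 + 1, k_2 = 2f_1 + 2f_3 + 2, ρ = 2^{−⌊(f_1+f_3)/2⌋}. -/
open Finset

/-- The Gray map `φ : Z₄ → {−1,1}²`: φ(0)=(1,1), φ(1)=(1,−1), φ(2)=(−1,−1), φ(3)=(−1,1). -/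
def gray (x : ZMod 4) : Fin 2 → ℤ := fun c =>
  if c = 0 then (if x = 0 ∨ x = 1 then 1 else -1)
  else (if x = 0 ∨ x = 3 then 1 else -1)

/-- The `2^{2n} × (2n+2)` two-level design which is the Gray-map image of the quaternary
code generated by `G = (v, Iₙ)`.  Rows are indexed by `u : Fin n → ZMod 4`; the codeword is
`(∑ uᵢvᵢ, u₁, …, uₙ)` and each `Z₄`-coordinate gives two ±1 columns via the Gray map. -/
def Dv {n : ℕ} (v : Fin n → ZMod 4) :
    (Fin n → ZMod 4) → (Fin (n + 1) × Fin 2) → ℤ :=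
  fun u p => gray ((Fin.cons (∑ i, u i * v i) u : Fin (n + 1) → ZMod 4) p.1) p.2

/-- The J-characteristic `j(s; D) = ∑ᵢ ∏_{c ∈ s} D i c`. -/
def Jchar {I J : Type*} [Fintype I] (D : I → J → ℤ) (s : Finset J) : ℤ :=
  ∑ i, ∏ c ∈ s, D i c

/-- The aliasing index `ρ(s; D) = |j(s; D)| / N`. -/
def rho {I J : Type*} [Fintype I] (D : I → J → ℤ) (s : Finset J) : ℚ :=
  |(Jchar D s : ℚ)| / (Fintype.card I : ℚ)

/-- `freq v z` = number of occurrences of `z ∈ Z₄` in the vector `v`. -/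
def freq {n : ℕ} (v : Fin n → ZMod 4) (z : ZMod 4) : ℕ :=
  (Finset.univ.filter fun i => v i = z).card

/-- A design has projectivity (at least) `p` if every projection onto `p` columns contains a
complete `2^p` factorial. -/
def hasProjectivity {I J : Type*} (D : I → J → ℤ) (p : ℕ) : Prop :=
  ∀ s : Finset J, s.card = p → ∀ ε : J → ℤ, (∀ c, ε c = 1 ∨ ε c = -1) →
    ∃ i, ∀ c ∈ s, D i c = ε c

/-- `hasResolution D R` : the generalized resolution of `D` equals `R`, i.e.
`R = r + 1 − max_{|s| = r} ρ(s; D)` where `r` is the smallest size of a (nonempty) column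
subset with positive aliasing index. -/
def hasResolution {I J : Type*} [Fintype I] (D : I → J → ℤ) (R : ℚ) : Prop :=
  ∃ (r : ℕ) (m : ℚ),
    (∃ s : Finset J, s.card = r ∧ 0 < rho D s) ∧
    (∀ s : Finset J, s.Nonempty → s.card < r → rho D s = 0) ∧
    (∃ s : Finset J, s.card = r ∧ rho D s = m) ∧
    (∀ s : Finset J, s.card = r → rho D s ≤ m) ∧
    R = (r : ℚ) + 1 - m

/-- The generalized wordlength pattern `A_k(D) = ∑_{|s| = k} ρ(s; D)²`. -/
def Apattern {I J : Type*} [Fintype I] [Fintype J] (D : I → J → ℤ) (k : ℕ) : ℚ :=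
  ∑ s ∈ Finset.powersetCard k Finset.univ, (rho D s) ^ 2

/-- The half-fraction of `D` obtained by keeping the rows where the branching column `b`
equals `+1` and deleting column `b`. -/
def halfFraction {I J : Type*} (D : I → J → ℤ) (b : J) :
    {i : I // D i b = 1} → {c : J // c ≠ b} → ℤ :=
  fun i c => D i.1 c.1

/-- Sequential (lexicographic) comparison of generalized wordlength patterns:
`D` has no more aberration than `D'`. -/
def wlpLe {I I' J : Type*} [Fintype I] [Fintype I'] [Fintype J]
    (D : I → J → ℤ) (D' : I' → J → ℤ) : Prop :=
  ∀ k : ℕ, (∀ j < k, Apattern D j = Apattern D' j) → Apattern D k ≤ Apattern D' k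


/-!
Expanding the Gray-map coordinates in the characters of `ℤ/4` and applying Poisson summation
over the code generated by `(v, Iₙ)`, whose dual code is spanned by `(-1, v)`, writes
`4 j(s; D)` as a sum over `t ∈ ℤ/4` of products of local Fourier coefficients. The term `t = 0`
survives only for `s = ∅`, the term `t = 2` only for the complete word (both Gray columns at the
odd coordinates of `(-1, v)`), and the terms `t = 1, 3` only for the partial words (one Gray
column at each odd coordinate, both at each coordinate equal to `2`). For a partial word they add
up to `2 Re ((1 - i)ᵐ iᵃ)`, with `m` the number of odd coordinates and `a` determined by the
chosen columns; this is `± 2 ^ (m / 2 + 1)`, except that for even `m` it vanishes for half of the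
choices. A column `b` over an entry `2` of `v` lies in every partial word and in no complete word,
so `j(s; D′) = (j(s; D) + j(s ∪ {b}; D)) / 2` turns these words into those of `D′`.
-/

namespace QuaternaryDesign

open Function Zsqrtd

local notation "ℤ[i]" => GaussianInt

section Fourier

def chi : AddChar (ZMod 4) ℤ[i] where
  toFun x := sqrtd ^ x.val
  map_zero_eq_one' := rfl
  map_add_eq_mul' := by decide

lemma chi_sum {α : Type*} (s : Finset α) (f : α → ZMod 4) :
    chi (∑ j ∈ s, f j) = ∏ j ∈ s, chi (f j) := by
  classical
  induction s using Finset.induction with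
  | empty => simp
  | insert _ _ h ih => rw [sum_insert h, prod_insert h, AddChar.map_add_eq_mul, ih]

lemma sum_chi_mul (z : ZMod 4) : ∑ t, chi (t * z) = if z = 0 then 4 else 0 := by
  revert z; decide

def dft (f : ZMod 4 → ℤ[i]) (t : ZMod 4) : ℤ[i] := ∑ x, f x * chi (t * x)

variable {n : ℕ}

lemma prod_dft_eq_sum (v : Fin n → ZMod 4) (g : Fin n → ZMod 4 → ℤ[i]) (t : ZMod 4) :
    ∏ j, dft (g j) (-t * v j)
      = ∑ u : Fin n → ZMod 4, (∏ j, g j (u j)) * chi (-t * ∑ j, u j * v j) := by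
  simp only [dft, prod_univ_sum, Fintype.piFinset_univ, prod_mul_distrib, mul_sum, chi_sum]
  refine sum_congr rfl fun u _ => ?_
  congr 1
  refine prod_congr rfl fun j _ => ?_
  ring_nf

/-- Poisson summation over the code generated by `(v, Iₙ)`. -/
theorem four_mul_sum_code (v : Fin n → ZMod 4) (f : ZMod 4 → ℤ[i])
    (g : Fin n → ZMod 4 → ℤ[i]) :
    4 * ∑ u : Fin n → ZMod 4, f (∑ j, u j * v j) * ∏ j, g j (u j)
      = ∑ t, dft f t * ∏ j, dft (g j) (-t * v j) := by
  have hdelta (u : Fin n → ZMod 4) :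
      ∑ w, f w * ∑ t, chi (t * (w - ∑ j, u j * v j)) = 4 * f (∑ j, u j * v j) := by
    simp [sum_chi_mul, sub_eq_zero, mul_comm]
  have hsplit (t w : ZMod 4) (u : Fin n → ZMod 4) :
      chi (t * (w - ∑ j, u j * v j)) = chi (t * w) * chi (-t * ∑ j, u j * v j) := by
    rw [← AddChar.map_add_eq_mul]; ring_nf
  symm
  calc ∑ t, dft f t * ∏ j, dft (g j) (-t * v j)
      = ∑ t, ∑ u : Fin n → ZMod 4, ∑ w,
          (∏ j, g j (u j)) * (f w * chi (t * (w - ∑ j, u j * v j))) := by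
        refine sum_congr rfl fun t _ => ?_
        rw [prod_dft_eq_sum, dft, sum_mul_sum, sum_comm]
        simp only [hsplit]
        exact sum_congr rfl fun u _ => sum_congr rfl fun w _ => by ring
    _ = ∑ u : Fin n → ZMod 4,
          (∏ j, g j (u j)) * ∑ w, f w * ∑ t, chi (t * (w - ∑ j, u j * v j)) := by
        rw [sum_comm]
        refine sum_congr rfl fun u _ => ?_
        rw [sum_comm]
        simp only [mul_sum]
    _ = _ := by rw [mul_sum]; exact sum_congr rfl fun u _ => by rw [hdelta]; ring

end Fourier

section Columns

variable {κ : Type*}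

/-- `σ : Bool × Bool` records which of the two Gray columns of a `ℤ/4`-coordinate are chosen. -/
def bit (σ : Bool × Bool) (c : Fin 2) : Bool := if c = 0 then σ.1 else σ.2

def numBits (σ : Bool × Bool) : ℕ := ∑ c, if bit σ c then 1 else 0

def single (c : Fin 2) : Bool × Bool := (c = 0, c = 1)

lemma bit_true_true : ∀ c, bit (true, true) c = true := by decide

lemma bit_false_false : ∀ c, bit (false, false) c = false := by decide

lemma bit_single : ∀ c c', bit (single c) c' = decide (c' = c) := by decide

lemma single_injective : Injective single := by decide

lemma single_ne_false_false : ∀ c, single c ≠ (false, false) := by decide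

lemma single_ne_true_true : ∀ c, single c ≠ (true, true) := by decide

lemma rev_ne_self : ∀ c : Fin 2, c.rev ≠ c := by decide

def pattern [DecidableEq κ] (s : Finset (κ × Fin 2)) (j : κ) : Bool × Bool :=
  ((j, 0) ∈ s, (j, 1) ∈ s)

def columns [Fintype κ] (τ : κ → Bool × Bool) : Finset (κ × Fin 2) :=
  univ.filter fun p => bit (τ p.1) p.2

lemma bit_pattern [DecidableEq κ] (s : Finset (κ × Fin 2)) (j : κ) (c : Fin 2) :
    bit (pattern s j) c = decide ((j, c) ∈ s) := by
  fin_cases c <;> rfl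

lemma pattern_ne_of_mem [DecidableEq κ] {s : Finset (κ × Fin 2)} {j : κ} {c : Fin 2}
    (h : (j, c) ∈ s) : pattern s j ≠ (false, false) := fun hj => by
  simpa [hj, bit_false_false, h] using bit_pattern s j c

lemma mem_columns [Fintype κ] {τ : κ → Bool × Bool} {p : κ × Fin 2} :
    p ∈ columns τ ↔ bit (τ p.1) p.2 := by
  simp [columns]

lemma columns_pattern [Fintype κ] [DecidableEq κ] (s : Finset (κ × Fin 2)) :
    columns (pattern s) = s := by
  ext p; simp [mem_columns, bit_pattern]

lemma pattern_columns [Fintype κ] [DecidableEq κ] (τ : κ → Bool × Bool) :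
    pattern (columns τ) = τ := by
  funext j; simp [pattern, mem_columns, bit]

lemma card_columns [Fintype κ] (τ : κ → Bool × Bool) :
    #(columns τ) = ∑ j, numBits (τ j) := by
  rw [columns, card_filter, Fintype.sum_prod_type]
  rfl

lemma gray_eq_one_or_eq_neg_one : ∀ x c, gray x c = 1 ∨ gray x c = -1 := by decide

def grayProd (σ : Bool × Bool) (x : ZMod 4) : ℤ := ∏ c, if bit σ c then gray x c else 1

lemma prod_gray_eq_prod_grayProd [Fintype κ] [DecidableEq κ] (s : Finset (κ × Fin 2))
    (x : κ → ZMod 4) : ∏ p ∈ s, gray (x p.1) p.2 = ∏ j, grayProd (pattern s j) (x j) := by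
  rw [← prod_ite_mem_eq, Fintype.prod_prod_type]
  refine prod_congr rfl fun j _ => prod_congr rfl fun c _ => ?_
  simp [bit_pattern]

end Columns

section DualExpansion

def grayHat (σ : Bool × Bool) : ZMod 4 → ℤ[i] := dft fun x => (grayProd σ x : ℤ[i])

/-- The term of the dual codeword `t • w` in the expansion of a J-characteristic. -/
def dualProd {κ : Type*} [Fintype κ] (w : κ → ZMod 4) (τ : κ → Bool × Bool) (t : ZMod 4) :
    ℤ[i] :=
  ∏ j, grayHat (τ j) (-t * w j)

variable {n : ℕ}

def dualGen (v : Fin n → ZMod 4) : Fin (n + 1) → ZMod 4 := Fin.cons (-1) v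

theorem four_mul_Jchar_Dv (v : Fin n → ZMod 4) (s : Finset (Fin (n + 1) × Fin 2)) :
    4 * (Jchar (Dv v) s : ℤ[i]) = ∑ t, dualProd (dualGen v) (pattern s) t := by
  have hrow (u : Fin n → ZMod 4) : ∏ p ∈ s, Dv v u p
      = grayProd (pattern s 0) (∑ j, u j * v j) * ∏ j, grayProd (pattern s j.succ) (u j) := by
    simp only [Dv, prod_gray_eq_prod_grayProd, Fin.prod_univ_succ, Fin.cons_zero, Fin.cons_succ]
  simp only [Jchar, hrow, Int.cast_sum, Int.cast_mul, Int.cast_prod]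
  rw [four_mul_sum_code v (fun x => (grayProd (pattern s 0) x : ℤ[i]))
    (fun j x => (grayProd (pattern s j.succ) x : ℤ[i]))]
  simp only [dualProd, Fin.prod_univ_succ, dualGen, Fin.cons_zero, Fin.cons_succ, mul_neg,
    mul_one, neg_neg]
  rfl

end DualExpansion

section LocalCoefficients

def completeBits (a : ZMod 4) : Bool × Bool :=
  if a = 1 ∨ a = 3 then (true, true) else (false, false)

def evenBits (a : ZMod 4) : Bool × Bool := if a = 2 then (true, true) else (false, false)

def IsPartialBits (a : ZMod 4) (σ : Bool × Bool) : Prop :=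
  if a = 1 ∨ a = 3 then ∃ c, σ = single c else σ = evenBits a

instance (a : ZMod 4) (σ : Bool × Bool) : Decidable (IsPartialBits a σ) := by
  unfold IsPartialBits; infer_instance

/-- The exponent of `i` in `grayHat (single c) (-a)` for odd `a`. -/
def signExp (a : ZMod 4) (c : Fin 2) : ℕ :=
  if (a = 1 ∧ c = 1) ∨ (a = 3 ∧ c = 0) then 1 else 0

lemma two_not_odd : ¬ ((2 : ZMod 4) = 1 ∨ (2 : ZMod 4) = 3) := by decide

lemma grayHat_zero_of_ne : ∀ σ, σ ≠ (false, false) → grayHat σ 0 = 0 := by decide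

lemma grayHat_neg_two_mul_of_ne : ∀ σ a, σ ≠ completeBits a → grayHat σ (-2 * a) = 0 := by
  decide

lemma grayHat_completeBits : ∀ a, grayHat (completeBits a) (-2 * a) = 4 := by decide

lemma grayHat_odd_of_not_isPartialBits : ∀ σ a t, (t = 1 ∨ t = 3) → ¬ IsPartialBits a σ →
    grayHat σ (-t * a) = 0 := by decide

lemma grayHat_evenBits : ∀ a t, ¬ (a = 1 ∨ a = 3) → (t = 1 ∨ t = 3) →
    grayHat (evenBits a) (-t * a) = 4 := by decide

lemma grayHat_single_neg_one_mul : ∀ a c, (a = 1 ∨ a = 3) →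
    grayHat (single c) (-1 * a) = 2 * (1 - sqrtd) * sqrtd ^ signExp a c := by decide

lemma grayHat_single_neg_three_mul : ∀ a c, (a = 1 ∨ a = 3) →
    grayHat (single c) (-3 * a) = 2 * (1 + sqrtd) * (-sqrtd) ^ signExp a c := by decide

lemma signExp_rev_add_signExp :
    ∀ a c, (a = 1 ∨ a = 3) → signExp a c.rev + signExp a c = 1 := by
  decide

end LocalCoefficients

section TwoRe

/-- `2 Re ((1 - i)ᵐ iᵃ)`. -/
def twoRe (m a : ℕ) : ℤ[i] := (1 - sqrtd) ^ m * sqrtd ^ a + (1 + sqrtd) ^ m * (-sqrtd) ^ a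

lemma twoRe_mod_four (m a : ℕ) : twoRe m a = twoRe m (a % 4) := by
  have hi : (sqrtd : ℤ[i]) ^ 4 = 1 := by decide
  have hi' : (-sqrtd : ℤ[i]) ^ 4 = 1 := by decide
  rw [twoRe, twoRe, pow_eq_pow_mod a hi, pow_eq_pow_mod a hi']

lemma twoRe_add_two_add_one (m a : ℕ) : twoRe (m + 2) (a + 1) = 2 * twoRe m a := by
  have h₁ : (1 - sqrtd : ℤ[i]) ^ 2 * sqrtd = 2 := by decide
  have h₂ : (1 + sqrtd : ℤ[i]) ^ 2 * -sqrtd = 2 := by decide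
  rw [twoRe, twoRe]
  linear_combination (sqrtd ^ a * (1 - sqrtd) ^ m) * h₁ + ((-sqrtd) ^ a * (1 + sqrtd) ^ m) * h₂

lemma twoRe_add_two (m a : ℕ) : twoRe (m + 2) a = 2 * twoRe m (a + 3) := by
  rw [twoRe_mod_four, ← Nat.add_mod_right, ← twoRe_mod_four, twoRe_add_two_add_one]

lemma twoRe_eq_zero {m a : ℕ} (hm : m % 2 = 0) (ha : a % 2 ≠ m / 2 % 2) : twoRe m a = 0 := by
  induction m using Nat.twoStepInduction generalizing a with
  | zero =>
    rw [twoRe_mod_four]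
    have : a % 4 < 4 := Nat.mod_lt _ (by norm_num)
    interval_cases ha' : a % 4 <;> first | decide | omega
  | one => omega
  | more m ih _ => rw [twoRe_add_two, ih (by omega) (by omega), mul_zero]

lemma exists_twoRe_eq {m a : ℕ} (h : m % 2 = 0 → a % 2 = m / 2 % 2) :
    ∃ e : ℤ, |e| = 1 ∧ twoRe m a = e * 2 ^ (m / 2 + 1) := by
  induction m using Nat.twoStepInduction generalizing a with
  | zero =>
    rw [twoRe_mod_four]
    have : a % 4 < 4 := Nat.mod_lt _ (by norm_num)
    interval_cases ha : a % 4
    · exact ⟨1, rfl, by decide⟩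
    · omega
    · exact ⟨-1, rfl, by decide⟩
    · omega
  | one =>
    rw [twoRe_mod_four]
    have : a % 4 < 4 := Nat.mod_lt _ (by norm_num)
    interval_cases a % 4
    · exact ⟨1, rfl, by decide⟩
    · exact ⟨1, rfl, by decide⟩
    · exact ⟨-1, rfl, by decide⟩
    · exact ⟨-1, rfl, by decide⟩
  | more m ih _ =>
    obtain ⟨e, he, h⟩ := ih (a := a + 3) (by omega)
    exact ⟨e, he, by rw [twoRe_add_two, h, show (m + 2) / 2 = m / 2 + 1 by omega]; ring⟩

end TwoRe

section Words

variable {κ : Type*} [Fintype κ] {w : κ → ZMod 4}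

def oddSupport (w : κ → ZMod 4) : Finset κ := univ.filter fun j => w j = 1 ∨ w j = 3

lemma mem_oddSupport {j : κ} : j ∈ oddSupport w ↔ w j = 1 ∨ w j = 3 := by
  simp [oddSupport]

def completePattern (w : κ → ZMod 4) (j : κ) : Bool × Bool := completeBits (w j)

def partialPattern (w : κ → ZMod 4) (ε : oddSupport w → Fin 2) (j : κ) : Bool × Bool :=
  if h : w j = 1 ∨ w j = 3 then single (ε ⟨j, mem_oddSupport.2 h⟩) else evenBits (w j)

def signExponent (w : κ → ZMod 4) (ε : oddSupport w → Fin 2) : ℕ :=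
  ∑ j : oddSupport w, signExp (w j) (ε j)

lemma completePattern_of_mem {j : κ} (hj : j ∈ oddSupport w) :
    completePattern w j = (true, true) := by
  simp [completePattern, completeBits, mem_oddSupport.1 hj]

lemma partialPattern_of_mem (ε : oddSupport w → Fin 2) {j : κ} (hj : j ∈ oddSupport w) :
    partialPattern w ε j = single (ε ⟨j, hj⟩) := by
  simp [partialPattern, mem_oddSupport.1 hj]

lemma completePattern_ne_partialPattern {j : κ} (hj : j ∈ oddSupport w)
    (ε : oddSupport w → Fin 2) : completePattern w ≠ partialPattern w ε := fun h => by
  have := congrFun h j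
  rw [completePattern_of_mem hj, partialPattern_of_mem ε hj] at this
  exact single_ne_true_true _ this.symm

lemma exists_eq_partialPattern {τ : κ → Bool × Bool} (h : ∀ j, IsPartialBits (w j) (τ j)) :
    ∃ ε, τ = partialPattern w ε := by
  have hodd (j : oddSupport w) : ∃ c, τ j = single c := by
    simpa [IsPartialBits, mem_oddSupport.1 j.2] using h j
  choose ε hε using hodd
  refine ⟨ε, funext fun j => ?_⟩
  by_cases hj : w j = 1 ∨ w j = 3
  · simpa [partialPattern, hj] using hε ⟨j, mem_oddSupport.2 hj⟩
  · simpa [partialPattern, hj, IsPartialBits] using h j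

lemma mem_columns_completePattern {j : κ} (hj : j ∈ oddSupport w) (c : Fin 2) :
    (j, c) ∈ columns (completePattern w) := by
  simp [mem_columns, completePattern_of_mem hj, bit_true_true]

lemma mem_columns_partialPattern (ε : oddSupport w → Fin 2) {j : κ} (hj : j ∈ oddSupport w) :
    (j, ε ⟨j, hj⟩) ∈ columns (partialPattern w ε) := by
  simp [mem_columns, partialPattern_of_mem ε hj, bit_single]

lemma rev_notMem_columns_partialPattern (ε : oddSupport w → Fin 2) {j : κ}
    (hj : j ∈ oddSupport w) : (j, (ε ⟨j, hj⟩).rev) ∉ columns (partialPattern w ε) := by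
  simp [mem_columns, partialPattern_of_mem ε hj, bit_single, rev_ne_self]

end Words

section DualProd

variable {κ : Type*} [Fintype κ] {w : κ → ZMod 4} {τ : κ → Bool × Bool}

lemma sum_zmod_four {M : Type*} [AddCommMonoid M] (f : ZMod 4 → M) :
    ∑ t, f t = f 0 + f 1 + f 2 + f 3 :=
  Fin.sum_univ_four f

lemma dualProd_zero_of_ne {j : κ} (h : τ j ≠ (false, false)) : dualProd w τ 0 = 0 :=
  prod_eq_zero (mem_univ j) (by rw [neg_zero, zero_mul]; exact grayHat_zero_of_ne _ h)

lemma dualProd_two_of_ne (h : τ ≠ completePattern w) : dualProd w τ 2 = 0 := by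
  obtain ⟨j, hj⟩ := ne_iff.1 h
  exact prod_eq_zero (mem_univ j) (grayHat_neg_two_mul_of_ne _ _ hj)

lemma dualProd_two_completePattern (w : κ → ZMod 4) :
    dualProd w (completePattern w) 2 = 4 ^ Fintype.card κ := by
  simp only [dualProd, completePattern, grayHat_completeBits, prod_const, card_univ]

lemma dualProd_odd_of_ne {t : ZMod 4} (ht : t = 1 ∨ t = 3)
    (h : ∀ ε, τ ≠ partialPattern w ε) : dualProd w τ t = 0 := by
  obtain ⟨j, hj⟩ : ∃ j, ¬ IsPartialBits (w j) (τ j) := by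
    by_contra! hall
    obtain ⟨ε, hε⟩ := exists_eq_partialPattern hall
    exact h ε hε
  exact prod_eq_zero (mem_univ j) (grayHat_odd_of_not_isPartialBits _ _ _ ht hj)

lemma sum_dualProd_eq_zero {j : κ} (hj : τ j ≠ (false, false)) (hc : τ ≠ completePattern w)
    (hp : ∀ ε, τ ≠ partialPattern w ε) : ∑ t, dualProd w τ t = 0 := by
  rw [sum_zmod_four, dualProd_zero_of_ne hj, dualProd_two_of_ne hc,
    dualProd_odd_of_ne (Or.inl rfl) hp, dualProd_odd_of_ne (Or.inr rfl) hp]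
  simp

lemma sum_dualProd_completePattern {j : κ} (hj : j ∈ oddSupport w) :
    ∑ t, dualProd w (completePattern w) t = 4 ^ Fintype.card κ := by
  have hp (ε : oddSupport w → Fin 2) := completePattern_ne_partialPattern hj ε
  rw [sum_zmod_four, dualProd_zero_of_ne (j := j) (by simp [completePattern_of_mem hj]),
    dualProd_two_completePattern, dualProd_odd_of_ne (Or.inl rfl) hp,
    dualProd_odd_of_ne (Or.inr rfl) hp]
  simp

variable [DecidableEq κ]

lemma dualProd_partialPattern_odd (ε : oddSupport w → Fin 2) {t : ZMod 4}
    (ht : t = 1 ∨ t = 3) :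
    dualProd w (partialPattern w ε) t
      = (∏ j : oddSupport w, grayHat (single (ε j)) (-t * w j)) * 4 ^ #(oddSupport w)ᶜ := by
  rw [dualProd, ← prod_mul_prod_compl (oddSupport w), ← prod_coe_sort (oddSupport w)]
  congr 1
  · exact prod_congr rfl fun j _ => by rw [partialPattern_of_mem ε j.2]
  · rw [← prod_const]
    refine prod_congr rfl fun j hj => ?_
    have hj' : ¬ (w j = 1 ∨ w j = 3) := mem_oddSupport.not.1 (mem_compl.1 hj)
    simp only [partialPattern, hj', dite_false]
    exact grayHat_evenBits _ _ hj' ht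

lemma sum_dualProd_partialPattern {j : κ} (hj : j ∈ oddSupport w) (ε : oddSupport w → Fin 2) :
    ∑ t, dualProd w (partialPattern w ε) t
      = 4 ^ #(oddSupport w)ᶜ * 2 ^ #(oddSupport w)
          * twoRe #(oddSupport w) (signExponent w ε) := by
  have hodd (j : oddSupport w) := mem_oddSupport.1 j.2
  rw [sum_zmod_four, dualProd_zero_of_ne (j := j)
      (by rw [partialPattern_of_mem ε hj]; exact single_ne_false_false _),
    dualProd_two_of_ne (fun h => completePattern_ne_partialPattern hj ε h.symm), add_zero,
    zero_add, dualProd_partialPattern_odd ε (Or.inl rfl),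
    dualProd_partialPattern_odd ε (Or.inr rfl)]
  simp only [grayHat_single_neg_one_mul _ _ (hodd _), grayHat_single_neg_three_mul _ _ (hodd _),
    prod_mul_distrib, prod_const, prod_pow_eq_pow_sum, card_univ, Fintype.card_coe, twoRe,
    signExponent]
  ring

end DualProd

section Signs

variable {κ : Type*} [Fintype κ] [DecidableEq κ] {w : κ → ZMod 4}

lemma signExponent_update_rev_mod_two (ε : oddSupport w → Fin 2) (j : oddSupport w) :
    signExponent w (update ε j (ε j).rev) % 2 ≠ signExponent w ε % 2 := by
  have hj := signExp_rev_add_signExp (w j) (ε j) (mem_oddSupport.1 j.2)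
  have hrest : ∑ k ∈ univ.erase j, signExp (w k) (update ε j (ε j).rev k)
      = ∑ k ∈ univ.erase j, signExp (w k) (ε k) :=
    sum_congr rfl fun k hk => by rw [update_of_ne (ne_of_mem_erase hk)]
  rw [signExponent, signExponent, ← add_sum_erase _ _ (mem_univ j),
    ← add_sum_erase _ _ (mem_univ j), hrest, update_self]
  omega

lemma two_mul_card_filter_signExponent_mod_two {j : κ} (hj : j ∈ oddSupport w) {r : ℕ}
    (hr : r < 2) :
    2 * #{ε : oddSupport w → Fin 2 | signExponent w ε % 2 = r} = 2 ^ #(oddSupport w) := by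
  set toggle : (oddSupport w → Fin 2) → oddSupport w → Fin 2 :=
    fun ε => update ε ⟨j, hj⟩ (ε ⟨j, hj⟩).rev
  have htoggle (ε) : toggle (toggle ε) = ε := by simp [toggle]
  have hcard : #{ε : oddSupport w → Fin 2 | signExponent w ε % 2 = r}
      = #{ε : oddSupport w → Fin 2 | ¬ signExponent w ε % 2 = r} := by
    refine card_nbij' toggle toggle (fun ε hε => ?_) (fun ε hε => ?_) (fun ε _ => htoggle ε)
      (fun ε _ => htoggle ε)
    all_goals
      have : signExponent w (toggle ε) % 2 ≠ _ := signExponent_update_rev_mod_two ε ⟨j, hj⟩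
      simp only [coe_filter, Set.mem_ofPred_eq, mem_univ, true_and] at hε ⊢
      omega
  rw [two_mul]
  nth_rewrite 2 [hcard]
  rw [card_filter_add_card_filter_not, card_univ, Fintype.card_fun, Fintype.card_fin,
    Fintype.card_coe]

/-- The sign choices for which `twoRe` does not vanish. -/
def aliasedSigns (w : κ → ZMod 4) : Finset (oddSupport w → Fin 2) :=
  {ε | #(oddSupport w) % 2 = 0 → signExponent w ε % 2 = #(oddSupport w) / 2 % 2}

lemma card_aliasedSigns {j : κ} (hj : j ∈ oddSupport w) :
    #(aliasedSigns w) = 2 * 4 ^ ((#(oddSupport w) - 1) / 2) := by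
  have hpos : 0 < #(oddSupport w) := card_pos.2 ⟨j, hj⟩
  have h4 : (4 : ℕ) = 2 ^ 2 := rfl
  by_cases hm : #(oddSupport w) % 2 = 0
  · have h :=
      two_mul_card_filter_signExponent_mod_two hj (Nat.mod_lt (#(oddSupport w) / 2) two_pos)
    have hpow : 2 ^ #(oddSupport w) = 4 ^ ((#(oddSupport w) - 1) / 2) * 4 := by
      rw [h4, ← pow_mul, ← pow_add]; congr 1; omega
    simp only [aliasedSigns, hm, forall_const]
    omega
  · simp only [aliasedSigns, hm, IsEmpty.forall_iff, filter_true, card_univ, Fintype.card_fun,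
      Fintype.card_fin, Fintype.card_coe]
    rw [h4, ← pow_mul, ← pow_succ']
    congr 1
    omega

end Signs

section HalfFraction

variable {I J : Type*} [Fintype I]

lemma Jchar_empty (D : I → J → ℤ) : Jchar D ∅ = Fintype.card I := by
  simp [Jchar]

variable [DecidableEq J] {D : I → J → ℤ} {b : J}

/-- `2 · [D i b = 1] = 1 + D i b` for a `±1` column `b`. -/
lemma two_mul_Jchar_halfFraction (hb : ∀ i, D i b = 1 ∨ D i b = -1)
    (s : Finset {c // c ≠ b}) :
    2 * Jchar (halfFraction D b) s
      = Jchar D (s.map (Embedding.subtype _))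
        + Jchar D (insert b (s.map (Embedding.subtype _))) := by
  have hb_notMem : b ∉ s.map (Embedding.subtype _) := by simp
  have hrow (i : I) : 2 * (if D i b = 1 then ∏ c ∈ s, D i c else 0)
      = ∏ c ∈ s.map (Embedding.subtype _), D i c
        + ∏ c ∈ insert b (s.map (Embedding.subtype _)), D i c := by
    rw [prod_insert hb_notMem, prod_map]
    rcases hb i with h | h <;> simp [h, two_mul]
  rw [Jchar, Jchar, Jchar, ← sum_add_distrib, ← sum_congr rfl fun i _ => hrow i, ← mul_sum,
    ← sum_filter, sum_subtype (p := fun i => D i b = 1) _ (by simp)]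
  rfl

lemma two_mul_card_halfFraction (hb : ∀ i, D i b = 1 ∨ D i b = -1) :
    2 * (Fintype.card {i // D i b = 1} : ℤ) = Fintype.card I + Jchar D {b} := by
  simpa [Jchar_empty] using two_mul_Jchar_halfFraction hb ∅

lemma map_subtype_ne (s : Finset J) (b : J) :
    (s.subtype (· ≠ b)).map (Embedding.subtype _) = s.erase b := by
  rw [subtype_map, filter_ne']

end HalfFraction

section DesignD

variable {n : ℕ} {v : Fin n → ZMod 4}

lemma Dv_eq_one_or_eq_neg_one (v u : Fin n → ZMod 4) (p : Fin (n + 1) × Fin 2) :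
    Dv v u p = 1 ∨ Dv v u p = -1 :=
  gray_eq_one_or_eq_neg_one _ _

lemma zero_mem_oddSupport_dualGen : 0 ∈ oddSupport (dualGen v) :=
  mem_oddSupport.2 (Or.inr (by decide : (-1 : ZMod 4) = 3))

lemma Jchar_Dv_eq_zero {s : Finset (Fin (n + 1) × Fin 2)} (hne : s.Nonempty)
    (hc : s ≠ columns (completePattern (dualGen v)))
    (hp : ∀ ε, s ≠ columns (partialPattern (dualGen v) ε)) : Jchar (Dv v) s = 0 := by
  obtain ⟨⟨j, c⟩, hjc⟩ := hne
  have h := four_mul_Jchar_Dv v s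
  rw [sum_dualProd_eq_zero (pattern_ne_of_mem hjc) (fun h => hc (by rw [← h, columns_pattern]))
    (fun ε h => hp ε (by rw [← h, columns_pattern]))] at h
  exact_mod_cast (mul_eq_zero.1 h).resolve_left (by decide)

lemma Jchar_Dv_completePattern (v : Fin n → ZMod 4) :
    Jchar (Dv v) (columns (completePattern (dualGen v))) = 4 ^ n := by
  have h := four_mul_Jchar_Dv v (columns (completePattern (dualGen v)))
  rw [pattern_columns, sum_dualProd_completePattern zero_mem_oddSupport_dualGen,
    Fintype.card_fin, pow_succ'] at h
  exact_mod_cast mul_left_cancel₀ (by decide) h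

lemma four_mul_Jchar_Dv_partialPattern (ε : oddSupport (dualGen v) → Fin 2) :
    4 * (Jchar (Dv v) (columns (partialPattern (dualGen v) ε)) : ℤ[i])
      = 4 ^ (n + 1 - #(oddSupport (dualGen v))) * 2 ^ #(oddSupport (dualGen v))
          * twoRe #(oddSupport (dualGen v)) (signExponent (dualGen v) ε) := by
  rw [four_mul_Jchar_Dv, pattern_columns, sum_dualProd_partialPattern zero_mem_oddSupport_dualGen,
    card_compl, Fintype.card_fin]

lemma Jchar_Dv_partialPattern_eq_zero {ε : oddSupport (dualGen v) → Fin 2}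
    (hε : ε ∉ aliasedSigns (dualGen v)) :
    Jchar (Dv v) (columns (partialPattern (dualGen v) ε)) = 0 := by
  simp only [aliasedSigns, mem_filter, mem_univ, true_and, Classical.not_imp] at hε
  have h := four_mul_Jchar_Dv_partialPattern ε
  rw [twoRe_eq_zero hε.1 hε.2, mul_zero] at h
  exact_mod_cast (mul_eq_zero.1 h).resolve_left (by decide)

lemma abs_Jchar_Dv_partialPattern {ε : oddSupport (dualGen v) → Fin 2}
    (hε : ε ∈ aliasedSigns (dualGen v)) :
    |Jchar (Dv v) (columns (partialPattern (dualGen v) ε))|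
      * 2 ^ ((#(oddSupport (dualGen v)) - 1) / 2) = 4 ^ n := by
  set J := Jchar (Dv v) (columns (partialPattern (dualGen v) ε))
  set m := #(oddSupport (dualGen v))
  have hm_pos : 0 < m := card_pos.2 ⟨0, zero_mem_oddSupport_dualGen⟩
  have hm_le : m ≤ n + 1 := (card_le_univ _).trans (Fintype.card_fin _).le
  obtain ⟨e, he, hT⟩ := exists_twoRe_eq (mem_filter.1 hε).2
  have hZ : 4 * J = 4 ^ (n + 1 - m) * 2 ^ m * (e * 2 ^ (m / 2 + 1)) := by
    have h := four_mul_Jchar_Dv_partialPattern ε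
    rw [hT] at h
    exact_mod_cast h
  have hpow :
      (4 : ℤ) ^ (n + 1 - m) * 2 ^ m * 2 ^ (m / 2 + 1) * 2 ^ ((m - 1) / 2) = 4 * 4 ^ n := by
    rw [show (4 : ℤ) = 2 ^ 2 by norm_num, ← pow_mul, ← pow_mul, ← pow_add, ← pow_add,
      ← pow_add, ← pow_add]
    congr 1
    omega
  have hJ : J * 2 ^ ((m - 1) / 2) = e * 4 ^ n :=
    mul_left_cancel₀ (by norm_num : (4 : ℤ) ≠ 0)
      (by rw [← mul_assoc, hZ]; linear_combination e * hpow)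
  rw [← abs_of_pos (by positivity : (0 : ℤ) < 2 ^ ((m - 1) / 2)), ← abs_mul, hJ, abs_mul, he,
    one_mul, abs_of_pos (by positivity)]

lemma sum_comp_eq_sum_freq_mul (v : Fin n → ZMod 4) (g : ZMod 4 → ℕ) :
    ∑ j, g (v j) = ∑ z, freq v z * g z := by
  rw [← sum_fiberwise univ v]
  refine sum_congr rfl fun z _ => ?_
  rw [sum_congr rfl fun j hj => by rw [(mem_filter.1 hj).2], sum_const, smul_eq_mul, freq]

lemma sum_comp_dualGen (v : Fin n → ZMod 4) (g : ZMod 4 → ℕ) :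
    ∑ j, g (dualGen v j)
      = g 3 + (freq v 0 * g 0 + freq v 1 * g 1 + freq v 2 * g 2 + freq v 3 * g 3) := by
  rw [Fin.sum_univ_succ, ← sum_zmod_four (fun z => freq v z * g z)]
  simp only [dualGen, Fin.cons_zero, Fin.cons_succ, sum_comp_eq_sum_freq_mul]
  rfl

lemma card_oddSupport_dualGen (v : Fin n → ZMod 4) :
    #(oddSupport (dualGen v)) = freq v 1 + freq v 3 + 1 := by
  rw [oddSupport, card_filter, sum_comp_dualGen v fun a => if a = 1 ∨ a = 3 then 1 else 0]
  simp only [show ((0 : ZMod 4) = 1 ∨ (0 : ZMod 4) = 3) = False by decide, two_not_odd]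
  simp
  ring

lemma card_columns_completePattern_dualGen (v : Fin n → ZMod 4) :
    #(columns (completePattern (dualGen v))) = 2 * (freq v 1 + freq v 3) + 2 := by
  have hbits : ∀ a, numBits (completeBits a) = if a = 1 ∨ a = 3 then 2 else 0 := by decide
  rw [card_columns]
  simp only [completePattern, hbits]
  rw [sum_comp_dualGen v fun a => if a = 1 ∨ a = 3 then 2 else 0]
  simp only [show ((0 : ZMod 4) = 1 ∨ (0 : ZMod 4) = 3) = False by decide, two_not_odd]
  simp
  ring

lemma card_columns_partialPattern_dualGen (v : Fin n → ZMod 4)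
    (ε : oddSupport (dualGen v) → Fin 2) :
    #(columns (partialPattern (dualGen v) ε)) = freq v 1 + 2 * freq v 2 + freq v 3 + 1 := by
  have hsingle : ∀ c, numBits (single c) = 1 := by decide
  have heven : ∀ a, numBits (evenBits a) = if a = 2 then 2 else 0 := by decide
  have hbits (j) : numBits (partialPattern (dualGen v) ε j)
      = if dualGen v j = 1 ∨ dualGen v j = 3 then 1 else if dualGen v j = 2 then 2 else 0 := by
    unfold partialPattern
    split_ifs
    · exact hsingle _
    all_goals simp_all
  rw [card_columns]
  simp only [hbits]
  rw [sum_comp_dualGen v fun a => if a = 1 ∨ a = 3 then 1 else if a = 2 then 2 else 0]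
  simp only [show ((0 : ZMod 4) = 1 ∨ (0 : ZMod 4) = 3) = False by decide, two_not_odd,
    show ((0 : ZMod 4) = 2) = False by decide]
  simp
  ring

lemma columns_partialPattern_injective :
    Injective fun ε => columns (partialPattern (dualGen v) ε) := by
  intro ε ε' h
  have h' := congrArg pattern h
  simp only [pattern_columns] at h'
  funext j
  have := congrFun h' j
  rwa [partialPattern_of_mem ε j.2, partialPattern_of_mem ε' j.2, single_injective.eq_iff] at this

end DesignD

section HalfFractionOfDv

variable {n : ℕ} {v : Fin n → ZMod 4} {i : Fin n} {c : Fin 2}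

variable (v i c) in
def completeWord : Finset {col : Fin (n + 1) × Fin 2 // col ≠ (i.succ, c)} :=
  (columns (completePattern (dualGen v))).subtype _

variable (v i c) in
def partialWord (ε : oddSupport (dualGen v) → Fin 2) :
    Finset {col : Fin (n + 1) × Fin 2 // col ≠ (i.succ, c)} :=
  (columns (partialPattern (dualGen v) ε)).subtype _

abbrev headSign (ε : oddSupport (dualGen v) → Fin 2) : Fin 2 :=
  ε ⟨0, zero_mem_oddSupport_dualGen⟩

lemma branch_notMem_columns_completePattern (hvi : v i = 2) (c : Fin 2) :
    (i.succ, c) ∉ columns (completePattern (dualGen v)) := by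
  simp [mem_columns, completePattern, dualGen, hvi, completeBits, two_not_odd, bit_false_false]

lemma branch_mem_columns_partialPattern (hvi : v i = 2) (c : Fin 2)
    (ε : oddSupport (dualGen v) → Fin 2) :
    (i.succ, c) ∈ columns (partialPattern (dualGen v) ε) := by
  simp [mem_columns, partialPattern, dualGen, hvi, evenBits, two_not_odd, bit_true_true]

lemma two_mul_card_halfFraction_Dv (hvi : v i = 2) :
    2 * (Fintype.card {u // Dv v u (i.succ, c) = 1} : ℤ) = 4 ^ n := by
  have hJ : Jchar (Dv v) {(i.succ, c)} = 0 := by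
    refine Jchar_Dv_eq_zero (singleton_nonempty _) (fun h => ?_) (fun ε h => ?_)
    · exact branch_notMem_columns_completePattern hvi c (h ▸ mem_singleton_self _)
    · have := branch_mem_columns_partialPattern hvi c.rev ε
      rw [← h, mem_singleton, Prod.mk.injEq] at this
      exact rev_ne_self c this.2
  rw [two_mul_card_halfFraction (Dv_eq_one_or_eq_neg_one v · _), hJ, add_zero,
    Fintype.card_fun, ZMod.card, Fintype.card_fin]
  push_cast
  rfl

lemma card_halfFraction_Dv_pos (hvi : v i = 2) :
    0 < Fintype.card {u // Dv v u (i.succ, c) = 1} := by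
  have h := two_mul_card_halfFraction_Dv hvi (c := c)
  have : (0 : ℤ) < 4 ^ n := by positivity
  omega

lemma two_mul_Jchar_halfFraction_completeWord (hvi : v i = 2) :
    2 * Jchar (halfFraction (Dv v) (i.succ, c)) (completeWord v i c) = 4 ^ n := by
  have hb := branch_notMem_columns_completePattern hvi c
  rw [two_mul_Jchar_halfFraction (Dv_eq_one_or_eq_neg_one v · _), completeWord, map_subtype_ne,
    erase_eq_of_notMem hb, Jchar_Dv_completePattern, add_eq_left]
  refine Jchar_Dv_eq_zero (insert_nonempty _ _) (fun h => hb (h ▸ mem_insert_self _ _))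
    (fun ε h => ?_)
  have hmem :
      (0, (headSign ε).rev) ∈ insert (i.succ, c) (columns (completePattern (dualGen v))) :=
    mem_insert_of_mem (mem_columns_completePattern zero_mem_oddSupport_dualGen _)
  rw [h] at hmem
  exact rev_notMem_columns_partialPattern ε _ hmem

lemma two_mul_Jchar_halfFraction_partialWord (hvi : v i = 2)
    (ε : oddSupport (dualGen v) → Fin 2) :
    2 * Jchar (halfFraction (Dv v) (i.succ, c)) (partialWord v i c ε)
      = Jchar (Dv v) (columns (partialPattern (dualGen v) ε)) := by
  have hb := branch_mem_columns_partialPattern hvi c ε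
  have h0 : (0 : Fin (n + 1)) ≠ i.succ := (Fin.succ_ne_zero i).symm
  rw [two_mul_Jchar_halfFraction (Dv_eq_one_or_eq_neg_one v · _), partialWord, map_subtype_ne,
    insert_erase hb, add_eq_right]
  refine Jchar_Dv_eq_zero ⟨_, mem_erase.2 ⟨fun h => h0 (congrArg Prod.fst h),
    mem_columns_partialPattern ε zero_mem_oddSupport_dualGen⟩⟩ (fun h => ?_) (fun ε' h => ?_)
  · have hmem : (0, (headSign ε).rev) ∈ columns (completePattern (dualGen v)) :=
      mem_columns_completePattern zero_mem_oddSupport_dualGen _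
    rw [← h] at hmem
    exact rev_notMem_columns_partialPattern ε _ (mem_of_mem_erase hmem)
  · have hmem := branch_mem_columns_partialPattern hvi c ε'
    rw [← h] at hmem
    exact notMem_erase _ _ hmem

lemma Jchar_halfFraction_eq_zero (hvi : v i = 2)
    {s : Finset {col : Fin (n + 1) × Fin 2 // col ≠ (i.succ, c)}} (hne : s.Nonempty)
    (hc : s ≠ completeWord v i c)
    (hp : ∀ ε ∈ aliasedSigns (dualGen v), s ≠ partialWord v i c ε) :
    Jchar (halfFraction (Dv v) (i.succ, c)) s = 0 := by
  set L := s.map (Embedding.subtype _)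
  have hbL : (i.succ, c) ∉ L := by simp [L]
  have hL : Jchar (Dv v) L = 0 := by
    refine Jchar_Dv_eq_zero hne.map (fun h => hc ?_) (fun ε h => ?_)
    · refine map_injective (Embedding.subtype _) ?_
      rw [completeWord, map_subtype_ne, ← h, erase_eq_of_notMem hbL]
    · exact hbL (h ▸ branch_mem_columns_partialPattern hvi c ε)
  have hinsert : Jchar (Dv v) (insert (i.succ, c) L) = 0 := by
    by_cases hε : ∃ ε, insert (i.succ, c) L = columns (partialPattern (dualGen v) ε)
    · obtain ⟨ε, hε⟩ := hε
      have hs : s = partialWord v i c ε := by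
        refine map_injective (Embedding.subtype _) ?_
        rw [partialWord, map_subtype_ne, ← hε, erase_insert hbL]
      rw [hε]
      exact Jchar_Dv_partialPattern_eq_zero fun h => hp ε h hs
    · push Not at hε
      exact Jchar_Dv_eq_zero (insert_nonempty _ _)
        (fun h => branch_notMem_columns_completePattern hvi c (h ▸ mem_insert_self _ _)) hε
  have h2 := two_mul_Jchar_halfFraction (Dv_eq_one_or_eq_neg_one v · (i.succ, c)) s
  rw [hL, hinsert] at h2
  omega

lemma rho_halfFraction_completeWord (hvi : v i = 2) :
    rho (halfFraction (Dv v) (i.succ, c)) (completeWord v i c) = 1 := by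
  have hJ : Jchar (halfFraction (Dv v) (i.succ, c)) (completeWord v i c)
      = Fintype.card {u // Dv v u (i.succ, c) = 1} := by
    have := two_mul_Jchar_halfFraction_completeWord hvi (c := c)
    have := two_mul_card_halfFraction_Dv hvi (c := c)
    omega
  have hN : (0 : ℚ) < Fintype.card {u // Dv v u (i.succ, c) = 1} := by
    exact_mod_cast card_halfFraction_Dv_pos hvi
  rw [rho, hJ, Int.cast_natCast, abs_of_pos hN, div_self hN.ne']

lemma rho_halfFraction_partialWord (hvi : v i = 2) {ε : oddSupport (dualGen v) → Fin 2}
    (hε : ε ∈ aliasedSigns (dualGen v)) :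
    rho (halfFraction (Dv v) (i.succ, c)) (partialWord v i c ε)
      = 1 / 2 ^ ((#(oddSupport (dualGen v)) - 1) / 2) := by
  have habs := abs_Jchar_Dv_partialPattern hε
  rw [← two_mul_Jchar_halfFraction_partialWord hvi (c := c) ε, abs_mul, abs_two,
    ← two_mul_card_halfFraction_Dv hvi (c := c), mul_assoc] at habs
  have hN : (Fintype.card {u // Dv v u (i.succ, c) = 1} : ℚ) ≠ 0 := by
    exact_mod_cast (card_halfFraction_Dv_pos hvi).ne'
  rw [rho, div_eq_div_iff hN (by positivity), one_mul]
  exact_mod_cast mul_left_cancel₀ two_ne_zero habs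

lemma card_completeWord (hvi : v i = 2) :
    #(completeWord v i c) = 2 * (freq v 1 + freq v 3) + 2 := by
  rw [completeWord, card_subtype, filter_ne', erase_eq_of_notMem
    (branch_notMem_columns_completePattern hvi c), card_columns_completePattern_dualGen]

lemma card_partialWord (hvi : v i = 2) (ε : oddSupport (dualGen v) → Fin 2) :
    #(partialWord v i c ε) = freq v 1 + 2 * freq v 2 + freq v 3 := by
  rw [partialWord, card_subtype, filter_ne', card_erase_of_mem
    (branch_mem_columns_partialPattern hvi c ε), card_columns_partialPattern_dualGen]
  rfl

lemma partialWord_injective (hvi : v i = 2) : Injective (partialWord v i c) := by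
  intro ε ε' h
  apply columns_partialPattern_injective
  have h' := congrArg (map (Embedding.subtype _)) h
  simp only [partialWord, map_subtype_ne] at h'
  dsimp only
  rw [← insert_erase (branch_mem_columns_partialPattern hvi c ε),
    ← insert_erase (branch_mem_columns_partialPattern hvi c ε'), h']

lemma completeWord_ne_partialWord (ε : oddSupport (dualGen v) → Fin 2) :
    completeWord v i c ≠ partialWord v i c ε := fun h => by
  have h' := congrArg (map (Embedding.subtype _)) h
  simp only [completeWord, partialWord, map_subtype_ne] at h'
  have hmem :
      (0, (headSign ε).rev) ∈ (columns (completePattern (dualGen v))).erase (i.succ, c) :=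
    mem_erase.2 ⟨fun h => Fin.succ_ne_zero i (congrArg Prod.fst h).symm,
      mem_columns_completePattern zero_mem_oddSupport_dualGen _⟩
  rw [h'] at hmem
  exact rev_notMem_columns_partialPattern ε _ (mem_of_mem_erase hmem)

end HalfFractionOfDv

end QuaternaryDesign

open QuaternaryDesign in
/-- Theorem 3(b): if the branching column is associated with an entry 2 of
`v`, the half-fraction `D′` has exactly one complete word of length `k₂` and exactly
`2/ρ² = 2·4^⌊(f₁+f₃)/2⌋` partial words of length `k₁ − 1` with aliasing index `ρ`. -/
theorem statement10 (n : ℕ) (v : Fin n → ZMod 4)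
    (f1 f2 f3 : ℕ) (h1 : f1 = freq v 1) (h2 : f2 = freq v 2) (h3 : f3 = freq v 3)
    (k1 k2 : ℕ) (hk1 : k1 = f1 + 2 * f2 + f3 + 1) (hk2 : k2 = 2 * f1 + 2 * f3 + 2)
    (p : ℚ) (hp : p = 1 / 2 ^ ((f1 + f3) / 2))
    (i : Fin n) (c : Fin 2) (hassoc : v i = 2) :
    ∃ S0 S1 : Finset (Finset {col : Fin (n + 1) × Fin 2 // col ≠ (i.succ, c)}),
      S0.card = 1 ∧
      S1.card = 2 * 4 ^ ((f1 + f3) / 2) ∧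
      Disjoint S0 S1 ∧
      (∀ s ∈ S0, s.card = k2 ∧ rho (halfFraction (Dv v) (i.succ, c)) s = 1) ∧
      (∀ s ∈ S1, s.card = k1 - 1 ∧ rho (halfFraction (Dv v) (i.succ, c)) s = p) ∧
      (∀ s : Finset {col : Fin (n + 1) × Fin 2 // col ≠ (i.succ, c)},
        s.Nonempty → s ∉ S0 → s ∉ S1 →
        rho (halfFraction (Dv v) (i.succ, c)) s = 0) := by
  have hodd : #(oddSupport (dualGen v)) - 1 = f1 + f3 := by
    rw [card_oddSupport_dualGen, h1, h3, Nat.add_sub_cancel]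
  refine ⟨{completeWord v i c}, (aliasedSigns (dualGen v)).image (partialWord v i c),
    card_singleton _, ?_, ?_, ?_, ?_, ?_⟩
  · rw [card_image_of_injective _ (partialWord_injective hassoc),
      card_aliasedSigns zero_mem_oddSupport_dualGen, hodd]
  · simpa [eq_comm] using
      fun ε (_ : ε ∈ aliasedSigns (dualGen v)) => completeWord_ne_partialWord ε
  · intro s hs
    rw [mem_singleton.1 hs, card_completeWord hassoc, rho_halfFraction_completeWord hassoc]
    exact ⟨by rw [hk2, h1, h3]; ring, rfl⟩
  · simp only [mem_image]
    rintro _ ⟨ε, hε, rfl⟩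
    rw [card_partialWord hassoc, rho_halfFraction_partialWord hassoc hε, hodd, hp]
    exact ⟨by omega, rfl⟩
  · intro s hne hs0 hs1
    rw [rho, Jchar_halfFraction_eq_zero hassoc hne (fun h => hs0 (mem_singleton.2 h))
      (fun ε hε h => hs1 (mem_image.2 ⟨ε, hε, h.symm⟩))]
    simp
end

section
/- Among all 2^{2n} × (2n+2) designs generated by G = (v, I_n): if n = 3k−1 (k ≥ 1), the minimum aberration design is given by f_1 + f_3 = 2k−1, f_2 = k, with wordlength pattern A_{4k} = 3; if n = 3k, by f_1 + f_3 = 2k, f_2 = k, with A_{4k+1} = 2, A_{4k+2} = 1; if n = 3k+1, by f_1 + f_3 = 2k, f_2 = k+1, with A_{4k+2} = 1, A_{4k+3} = 2 (all other A_i = 0). -/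
open Finset

open Polynomial

def c1 : ZMod 4 → ℤ := fun z => if z = 0 then 2 else if z = 2 then -2 else 0
def c2 : ZMod 4 → ℤ := fun z => if z = 0 ∨ z = 2 then 1 else -1
noncomputable def psi (z : ZMod 4) : Polynomial ℤ := 1 + C (c1 z) * X + C (c2 z) * X ^ 2
def d1 : ZMod 4 → ℕ := fun z => if z = 0 then 0 else if z = 2 then 2 else 1
def d2 : ZMod 4 → ℕ := fun z => if z = 0 ∨ z = 2 then 0 else 2

lemma zmod4_cases (z : ZMod 4) : z = 0 ∨ z = 1 ∨ z = 2 ∨ z = 3 := by revert z; decide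

lemma sum4 {M : Type*} [AddCommMonoid M] (g : ZMod 4 → M) :
    ∑ a : ZMod 4, g a = g 0 + g 1 + g 2 + g 3 := Fin.sum_univ_four g

lemma psi_expand (φ : ZMod 4 → ℤ) :
    ∑ a : ZMod 4, psi a * C (φ a)
      = C (∑ a : ZMod 4, φ a) + C (∑ a : ZMod 4, c1 a * φ a) * X
        + C (∑ a : ZMod 4, c2 a * φ a) * X ^ 2 := by
  rw [sum4, sum4 φ, sum4 (fun a => c1 a * φ a), sum4 (fun a => c2 a * φ a)]
  simp only [psi, map_add, map_mul]
  ring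

lemma psi_sum : ∑ a : ZMod 4, psi a = C 4 := by
  rw [sum4]
  have h1 : c1 0 + c1 1 + c1 2 + c1 3 = 0 := by decide
  have h2 : c2 0 + c2 1 + c2 2 + c2 3 = 0 := by decide
  simp only [psi]
  rw [show (4:ℤ) = 1 + 1 + 1 + 1 by norm_num]
  simp only [map_add, map_one]
  have e1 := congrArg C h1
  have e2 := congrArg C h2
  simp only [map_add, map_zero] at e1 e2
  linear_combination (X : Polynomial ℤ) * e1 + (X:Polynomial ℤ)^2 * e2

lemma psi_sum_c1 (v0 w : ZMod 4) :
    ∑ a : ZMod 4, psi a * C (c1 (w + a * v0)) = C 4 * C (c1 w) * X ^ (d1 v0) := by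
  rw [psi_expand]
  have h0 : ∀ v0 w : ZMod 4, (∑ a : ZMod 4, c1 (w + a * v0)) = if v0 = 0 then 4 * c1 w else 0 := by decide
  have h1 : ∀ v0 w : ZMod 4, (∑ a : ZMod 4, c1 a * c1 (w + a * v0)) = if v0 = 1 ∨ v0 = 3 then 4 * c1 w else 0 := by decide
  have h2 : ∀ v0 w : ZMod 4, (∑ a : ZMod 4, c2 a * c1 (w + a * v0)) = if v0 = 2 then 4 * c1 w else 0 := by decide
  rw [h0, h1, h2]
  rcases zmod4_cases v0 with h | h | h | h <;> subst h <;>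
    simp (config := { decide := true }) [d1, map_mul]

lemma psi_sum_c2 (v0 w : ZMod 4) :
    ∑ a : ZMod 4, psi a * C (c2 (w + a * v0)) = C 4 * C (c2 w) * X ^ (d2 v0) := by
  rw [psi_expand]
  have h0 : ∀ v0 w : ZMod 4, (∑ a : ZMod 4, c2 (w + a * v0)) = if v0 = 0 ∨ v0 = 2 then 4 * c2 w else 0 := by decide
  have h1 : ∀ v0 w : ZMod 4, (∑ a : ZMod 4, c1 a * c2 (w + a * v0)) = 0 := by decide
  have h2 : ∀ v0 w : ZMod 4, (∑ a : ZMod 4, c2 a * c2 (w + a * v0)) = if v0 = 1 ∨ v0 = 3 then 4 * c2 w else 0 := by decide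
  rw [h0, h1, h2]
  rcases zmod4_cases v0 with h | h | h | h <;> subst h <;>
    simp (config := { decide := true }) [d2, map_mul]

lemma freq_cons {n : ℕ} (a : ZMod 4) (y : Fin n → ZMod 4) (z : ZMod 4) :
    freq (Fin.cons a y) z = (if a = z then 1 else 0) + freq y z := by
  unfold freq
  rw [Finset.card_filter, Finset.card_filter, Fin.sum_univ_succ]
  simp

lemma freq_zero {v : Fin 0 → ZMod 4} {z : ZMod 4} : freq v z = 0 := by
  simp [freq]

lemma freq_total {n : ℕ} (v : Fin n → ZMod 4) :
    freq v 0 + freq v 1 + freq v 2 + freq v 3 = n := by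
  unfold freq
  rw [Finset.card_filter, Finset.card_filter, Finset.card_filter, Finset.card_filter,
    ← Finset.sum_add_distrib, ← Finset.sum_add_distrib, ← Finset.sum_add_distrib]
  have : ∀ z : ZMod 4, ((if z = 0 then 1 else 0) + (if z = 1 then 1 else 0)
      + (if z = 2 then 1 else 0) + (if z = 3 then 1 else 0) : ℕ) = 1 := by decide
  simp only [this, Finset.sum_const, card_univ, Fintype.card_fin, smul_eq_mul, mul_one]

lemma sum_pi_succ {M : Type*} [AddCommMonoid M] {n : ℕ} (f : (Fin (n+1) → ZMod 4) → M) :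
    ∑ x : Fin (n+1) → ZMod 4, f x
      = ∑ a : ZMod 4, ∑ y : Fin n → ZMod 4, f (Fin.cons a y) := by
  have hbij : Function.Bijective (fun p : ZMod 4 × (Fin n → ZMod 4) => Fin.cons p.1 p.2 : ZMod 4 × (Fin n → ZMod 4) → (Fin (n+1) → ZMod 4)) := by
    constructor
    · intro p q h
      have h0 := congrFun h 0
      simp only [Fin.cons_zero] at h0
      have ht : p.2 = q.2 := by
        funext i
        have := congrFun h i.succ
        simpa using this
      exact Prod.ext h0 ht
    · intro g
      exact ⟨(g 0, Fin.tail g), Fin.cons_self_tail g⟩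
  have h := Fintype.sum_bijective _ hbij (fun p : ZMod 4 × (Fin n → ZMod 4) => f (Fin.cons p.1 p.2)) f (fun p => rfl)
  rw [← h, Fintype.sum_prod_type]

lemma keyT : ∀ (n : ℕ) (v : Fin n → ZMod 4) (w : ZMod 4),
    ∑ x : Fin n → ZMod 4, psi (w + ∑ i, x i * v i) * ∏ i, psi (x i)
      = C ((4:ℤ)^n) * (1 + C (c1 w) * X ^ (freq v 1 + freq v 3 + 2 * freq v 2 + 1)
          + C (c2 w) * X ^ (2 * (freq v 1 + freq v 3) + 2))
  | 0, v, w => by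
      rw [Fintype.sum_eq_single (fun (i : Fin 0) => (0 : ZMod 4))
        (fun x hx => absurd (_root_.funext fun i => Fin.elim0 i) hx)]
      simp [psi, freq_zero]
  | (n+1), v, w => by
      rw [sum_pi_succ]
      have step : ∀ a : ZMod 4,
          (∑ y : Fin n → ZMod 4,
            psi (w + ∑ i, (Fin.cons a y : Fin (n+1) → ZMod 4) i * v i)
              * ∏ i, psi ((Fin.cons a y : Fin (n+1) → ZMod 4) i))
          = psi a * (C ((4:ℤ)^n)
              * (1 + C (c1 (w + a * v 0)) * X ^ (freq (Fin.tail v) 1 + freq (Fin.tail v) 3 + 2 * freq (Fin.tail v) 2 + 1)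
                  + C (c2 (w + a * v 0)) * X ^ (2 * (freq (Fin.tail v) 1 + freq (Fin.tail v) 3) + 2))) := by
        intro a
        rw [← keyT n (Fin.tail v) (w + a * v 0), Finset.mul_sum]
        apply Finset.sum_congr rfl
        intro y _
        rw [Fin.sum_univ_succ, Fin.prod_univ_succ]
        simp only [Fin.cons_zero, Fin.cons_succ, Fin.tail]
        rw [← add_assoc]
        ring
      simp only [step]
      have expand : ∑ a : ZMod 4, psi a * (C ((4:ℤ)^n)
              * (1 + C (c1 (w + a * v 0)) * X ^ (freq (Fin.tail v) 1 + freq (Fin.tail v) 3 + 2 * freq (Fin.tail v) 2 + 1)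
                  + C (c2 (w + a * v 0)) * X ^ (2 * (freq (Fin.tail v) 1 + freq (Fin.tail v) 3) + 2)))
          = C ((4:ℤ)^n) * ((∑ a : ZMod 4, psi a)
              + (∑ a : ZMod 4, psi a * C (c1 (w + a * v 0))) * X ^ (freq (Fin.tail v) 1 + freq (Fin.tail v) 3 + 2 * freq (Fin.tail v) 2 + 1)
              + (∑ a : ZMod 4, psi a * C (c2 (w + a * v 0))) * X ^ (2 * (freq (Fin.tail v) 1 + freq (Fin.tail v) 3) + 2)) := by
        rw [Finset.sum_mul, Finset.sum_mul, ← Finset.sum_add_distrib, ← Finset.sum_add_distrib,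
          Finset.mul_sum]
        apply Finset.sum_congr rfl
        intro a _
        ring
      rw [expand, psi_sum, psi_sum_c1, psi_sum_c2]
      have hfr : ∀ z : ZMod 4, freq v z = (if v 0 = z then 1 else 0) + freq (Fin.tail v) z := by
        intro z
        conv_lhs => rw [← Fin.cons_self_tail v]
        rw [freq_cons]
      rw [hfr 1, hfr 2, hfr 3]
      rcases zmod4_cases (v 0) with h | h | h | h <;> rw [h] <;>
        simp (config := { decide := true }) only [d1, d2] <;>
        simp only [if_true, if_false] <;>
        rw [pow_succ (4:ℤ) n, map_mul, show C (4:ℤ) = ((4:Polynomial ℤ)) from by norm_num] <;>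
        ring

lemma pair_prod (z z' : ZMod 4) :
    (C (gray z 0 * gray z' 0) * X + 1) * (C (gray z 1 * gray z' 1) * X + 1) = psi (z - z') := by
  rcases zmod4_cases z with hz | hz | hz | hz <;> rcases zmod4_cases z' with hz' | hz' | hz' | hz' <;>
    subst hz hz' <;>
    simp (config := { decide := true }) only [gray, psi, c1, c2, if_true, if_false] <;>
    simp only [map_one, map_neg, map_zero, map_mul, map_ofNat] <;> ring

lemma subset_expand {J : Type*} [Fintype J] [DecidableEq J] (ε : J → ℤ) :
    ∏ p : J, (C (ε p) * X + 1)
      = ∑ s ∈ (univ : Finset J).powerset, (∏ p ∈ s, C (ε p)) * X ^ s.card := by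
  rw [Finset.prod_add]
  refine Finset.sum_congr rfl fun s _ => ?_
  rw [Finset.prod_const_one, mul_one, Finset.prod_mul_distrib, Finset.prod_const]

lemma Q_eq (n : ℕ) (v : Fin n → ZMod 4) :
    ∑ s ∈ (univ : Finset (Fin (n+1) × Fin 2)).powerset,
        C ((Jchar (Dv v) s)^2) * X ^ s.card
      = C ((16:ℤ)^n) * (1 + C 2 * X ^ (freq v 1 + freq v 3 + 2 * freq v 2 + 1)
          + X ^ (2 * (freq v 1 + freq v 3) + 2)) := by
  have h1 : ∀ s : Finset (Fin (n+1) × Fin 2),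
      C ((Jchar (Dv v) s)^2) = ∑ u : Fin n → ZMod 4, ∑ u' : Fin n → ZMod 4,
        ∏ p ∈ s, C (Dv v u p * Dv v u' p) := by
    intro s
    rw [Jchar, sq, Finset.sum_mul_sum, map_sum]
    refine Finset.sum_congr rfl fun u _ => ?_
    rw [map_sum]
    refine Finset.sum_congr rfl fun u' _ => ?_
    rw [← Finset.prod_mul_distrib, map_prod]
  calc ∑ s ∈ (univ : Finset (Fin (n+1) × Fin 2)).powerset, C ((Jchar (Dv v) s)^2) * X ^ s.card
      = ∑ s ∈ (univ : Finset (Fin (n+1) × Fin 2)).powerset, ∑ u : Fin n → ZMod 4,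
          ∑ u' : Fin n → ZMod 4, (∏ p ∈ s, C (Dv v u p * Dv v u' p)) * X ^ s.card := by
        refine Finset.sum_congr rfl fun s _ => ?_
        rw [h1, Finset.sum_mul]
        refine Finset.sum_congr rfl fun u _ => ?_
        rw [Finset.sum_mul]
    _ = ∑ u : Fin n → ZMod 4, ∑ u' : Fin n → ZMod 4,
          ∑ s ∈ (univ : Finset (Fin (n+1) × Fin 2)).powerset,
            (∏ p ∈ s, C (Dv v u p * Dv v u' p)) * X ^ s.card := by
        rw [Finset.sum_comm]
        refine Finset.sum_congr rfl fun u _ => ?_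
        rw [Finset.sum_comm]
    _ = ∑ u : Fin n → ZMod 4, ∑ u' : Fin n → ZMod 4,
          ∏ p : Fin (n+1) × Fin 2, (C (Dv v u p * Dv v u' p) * X + 1) := by
        refine Finset.sum_congr rfl fun u _ => Finset.sum_congr rfl fun u' _ => ?_
        rw [subset_expand]
    _ = ∑ u : Fin n → ZMod 4, ∑ u' : Fin n → ZMod 4,
          ∏ j : Fin (n+1),
            psi ((Fin.cons (∑ i, u i * v i) u : Fin (n+1) → ZMod 4) j
              - (Fin.cons (∑ i, u' i * v i) u' : Fin (n+1) → ZMod 4) j) := by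
        refine Finset.sum_congr rfl fun u _ => Finset.sum_congr rfl fun u' _ => ?_
        rw [Fintype.prod_prod_type]
        refine Finset.prod_congr rfl fun j _ => ?_
        rw [Fin.prod_univ_two]
        exact pair_prod _ _
    _ = ∑ u : Fin n → ZMod 4, ∑ u' : Fin n → ZMod 4,
          ∏ j : Fin (n+1),
            psi ((Fin.cons (∑ i, (u - u') i * v i) (u - u') : Fin (n+1) → ZMod 4) j) := by
        refine Finset.sum_congr rfl fun u _ => Finset.sum_congr rfl fun u' _ => ?_
        refine Finset.prod_congr rfl fun j _ => ?_
        congr 1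
        refine Fin.cases ?_ ?_ j
        · simp only [Fin.cons_zero]
          rw [← Finset.sum_sub_distrib]
          exact Finset.sum_congr rfl fun i _ => by rw [Pi.sub_apply, sub_mul]
        · intro i
          simp [Fin.cons_succ]
    _ = ∑ u : Fin n → ZMod 4, ∑ x : Fin n → ZMod 4,
          ∏ j : Fin (n+1),
            psi ((Fin.cons (∑ i, x i * v i) x : Fin (n+1) → ZMod 4) j) := by
        refine Finset.sum_congr rfl fun u _ => ?_
        exact Fintype.sum_equiv (Equiv.subLeft u) _ _ (fun u' => rfl)
    _ = (4^n : ℕ) • ∑ x : Fin n → ZMod 4, psi (0 + ∑ i, x i * v i) * ∏ i, psi (x i) := by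
        rw [Finset.sum_const, card_univ]
        congr 1
        · rw [Fintype.card_fun, ZMod.card, Fintype.card_fin]
        · refine Finset.sum_congr rfl fun x _ => ?_
          rw [Fin.prod_univ_succ, zero_add]
          simp [Fin.cons_zero, Fin.cons_succ]
    _ = C ((16:ℤ)^n) * (1 + C 2 * X ^ (freq v 1 + freq v 3 + 2 * freq v 2 + 1)
          + X ^ (2 * (freq v 1 + freq v 3) + 2)) := by
        rw [keyT n v 0, nsmul_eq_mul, Nat.cast_pow,
          show ((4:ℕ) : Polynomial ℤ) = C (4:ℤ) by norm_num,
          show c1 0 = 2 from by decide, show c2 0 = 1 from by decide,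
          show ((16:ℤ))^n = 4^n * 4^n by rw [← mul_pow]; norm_num,
          map_mul, map_pow, map_one]
        ring


lemma sumJ (n : ℕ) (v : Fin n → ZMod 4) (k : ℕ) :
    ∑ s ∈ Finset.powersetCard k (univ : Finset (Fin (n+1) × Fin 2)), (Jchar (Dv v) s)^2
      = 16^n * ((if k = 0 then 1 else 0)
          + (if k = freq v 1 + freq v 3 + 2 * freq v 2 + 1 then 2 else 0)
          + (if k = 2 * (freq v 1 + freq v 3) + 2 then 1 else 0)) := by
  have h := congrArg (fun p : Polynomial ℤ => p.coeff k) (Q_eq n v)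
  simp only [Polynomial.finset_sum_coeff, Polynomial.coeff_C_mul, Polynomial.coeff_X_pow,
    Polynomial.coeff_add, Polynomial.coeff_one, mul_ite, mul_one, mul_zero] at h
  rw [Finset.powersetCard_eq_filter, Finset.sum_filter]
  rw [show (∑ s ∈ (univ : Finset (Fin (n+1) × Fin 2)).powerset,
      if s.card = k then (Jchar (Dv v) s)^2 else 0)
    = ∑ s ∈ (univ : Finset (Fin (n+1) × Fin 2)).powerset,
      if k = s.card then (Jchar (Dv v) s)^2 else 0 from
    Finset.sum_congr rfl fun s _ => if_congr eq_comm rfl rfl]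
  rw [h]

lemma Apattern_Dv (n : ℕ) (v : Fin n → ZMod 4) (k : ℕ) :
    Apattern (Dv v) k
      = (if k = 0 then 1 else 0)
        + (if k = freq v 1 + freq v 3 + 2 * freq v 2 + 1 then 2 else 0)
        + (if k = 2 * (freq v 1 + freq v 3) + 2 then 1 else 0) := by
  unfold Apattern rho
  have hcard : ((Fintype.card (Fin n → ZMod 4) : ℚ)) = 4 ^ n := by
    rw [Fintype.card_fun, ZMod.card, Fintype.card_fin]
    push_cast
    ring
  have hterm : ∀ s : Finset (Fin (n+1) × Fin 2),
      (|(Jchar (Dv v) s : ℚ)| / (Fintype.card (Fin n → ZMod 4) : ℚ))^2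
        = ((Jchar (Dv v) s : ℚ))^2 / (16 ^ n : ℚ) := by
    intro s
    rw [div_pow, sq_abs, hcard, ← pow_mul, mul_comm n 2, pow_mul]
    norm_num
  rw [Finset.sum_congr rfl fun s _ => hterm s, ← Finset.sum_div]
  have hs : (∑ s ∈ Finset.powersetCard k (univ : Finset (Fin (n+1) × Fin 2)),
      ((Jchar (Dv v) s : ℚ))^2)
    = ((∑ s ∈ Finset.powersetCard k (univ : Finset (Fin (n+1) × Fin 2)),
        (Jchar (Dv v) s)^2 : ℤ) : ℚ) := by
    push_cast
    rfl
  rw [hs, sumJ]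
  push_cast
  rw [mul_comm, mul_div_assoc, div_self (by positivity : ((16:ℚ))^n ≠ 0), mul_one]


def pat (a b : ℕ) : ℕ → ℚ := fun t =>
  (if t = 0 then 1 else 0) + (if t = a then 2 else 0) + (if t = b then 1 else 0)

lemma Apattern_pat (n : ℕ) (v : Fin n → ZMod 4) (k : ℕ) :
    Apattern (Dv v) k
      = pat (freq v 1 + freq v 3 + 2 * freq v 2 + 1) (2 * (freq v 1 + freq v 3) + 2) k :=
  Apattern_Dv n v k

lemma lex_of_lt (P P' : ℕ → ℚ) (m : ℕ) (hag : ∀ j < m, P j = P' j) (hlt : P m < P' m) :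
    ∀ t, (∀ j < t, P j = P' j) → P t ≤ P' t := by
  intro t ht
  rcases lt_trichotomy t m with h | h | h
  · exact (hag t h).le
  · subst h; exact hlt.le
  · exact absurd (ht m h) (ne_of_lt hlt)

lemma pat_wlp (a b a' b' : ℕ)
    (h0a : 1 ≤ a) (h0b : 1 ≤ b) (h0a' : 1 ≤ a') (h0b' : 1 ≤ b')
    (H : (a' = a ∧ b' = b) ∨ (min a' b' < min a b) ∨ (b < a ∧ a' = b ∧ b < b')) :
    ∀ t, (∀ j < t, pat a b j = pat a' b' j) → pat a b t ≤ pat a' b' t := by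
  rcases H with ⟨h1, h2⟩ | hmin | ⟨h1, h2, h3⟩
  · subst h1; subst h2; exact fun t _ => le_refl _
  · refine lex_of_lt _ _ (min a' b') ?_ ?_
    · intro j hj
      simp only [pat]
      rw [if_neg (show j ≠ a by omega), if_neg (show j ≠ b by omega),
        if_neg (show j ≠ a' by omega), if_neg (show j ≠ b' by omega)]
    · simp only [pat]
      rw [if_neg (show min a' b' ≠ 0 by omega), if_neg (show min a' b' ≠ a by omega),
        if_neg (show min a' b' ≠ b by omega)]
      rcases le_total a' b' with h | h
      · rw [min_eq_left h]
        split_ifs <;> norm_num <;> omega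
      · rw [min_eq_right h]
        split_ifs <;> norm_num <;> omega
  · refine lex_of_lt _ _ b ?_ ?_
    · intro j hj
      simp only [pat]
      rw [if_neg (show j ≠ a by omega), if_neg (show j ≠ b by omega),
        if_neg (show j ≠ a' by omega), if_neg (show j ≠ b' by omega)]
    · simp only [pat]
      rw [if_neg (show b ≠ 0 by omega), if_neg (show b ≠ a by omega),
        if_pos (show b = a' from h2.symm), if_neg (show b ≠ b' by omega)]
      norm_num


/-- Theorem 6: minimum aberration designs among all designs generated by
`(v, Iₙ)`, with their wordlength patterns, for `n = 3k−1`, `n = 3k`, `n = 3k+1` (`k ≥ 1`). -/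
theorem statement13 (n k : ℕ) (hk : 1 ≤ k) :
    (n = 3 * k - 1 →
      ∀ v : Fin n → ZMod 4, freq v 1 + freq v 3 = 2 * k - 1 → freq v 2 = k →
        Apattern (Dv v) (4 * k) = 3 ∧
        (∀ i : ℕ, 1 ≤ i → i ≠ 4 * k → Apattern (Dv v) i = 0) ∧
        (∀ v' : Fin n → ZMod 4, wlpLe (Dv v) (Dv v'))) ∧
    (n = 3 * k →
      ∀ v : Fin n → ZMod 4, freq v 1 + freq v 3 = 2 * k → freq v 2 = k →
        Apattern (Dv v) (4 * k + 1) = 2 ∧ Apattern (Dv v) (4 * k + 2) = 1 ∧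
        (∀ i : ℕ, 1 ≤ i → i ≠ 4 * k + 1 → i ≠ 4 * k + 2 → Apattern (Dv v) i = 0) ∧
        (∀ v' : Fin n → ZMod 4, wlpLe (Dv v) (Dv v'))) ∧
    (n = 3 * k + 1 →
      ∀ v : Fin n → ZMod 4, freq v 1 + freq v 3 = 2 * k → freq v 2 = k + 1 →
        Apattern (Dv v) (4 * k + 2) = 1 ∧ Apattern (Dv v) (4 * k + 3) = 2 ∧
        (∀ i : ℕ, 1 ≤ i → i ≠ 4 * k + 2 → i ≠ 4 * k + 3 → Apattern (Dv v) i = 0) ∧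
        (∀ v' : Fin n → ZMod 4, wlpLe (Dv v) (Dv v'))) := by
  refine ⟨?_, ?_, ?_⟩
  · intro hn v hq hf
    have ha : freq v 1 + freq v 3 + 2 * freq v 2 + 1 = 4 * k := by omega
    have hb : 2 * (freq v 1 + freq v 3) + 2 = 4 * k := by omega
    refine ⟨?_, ?_, ?_⟩
    · rw [Apattern_pat, ha, hb, pat]
      rw [if_neg (show 4 * k ≠ 0 by omega), if_pos rfl, if_pos rfl]
      norm_num
    · intro i hi1 hi2
      rw [Apattern_pat, ha, hb, pat]
      rw [if_neg (show i ≠ 0 by omega), if_neg hi2, if_neg hi2]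
      norm_num
    · intro v' t ht
      have hbound : freq v' 1 + freq v' 3 + freq v' 2 ≤ n := by
        have := freq_total v'; omega
      simp only [Apattern_pat, ha, hb] at ht ⊢
      exact pat_wlp _ _ _ _ (by omega) (by omega) (by omega) (by omega) (by omega) t ht
  · intro hn v hq hf
    have ha : freq v 1 + freq v 3 + 2 * freq v 2 + 1 = 4 * k + 1 := by omega
    have hb : 2 * (freq v 1 + freq v 3) + 2 = 4 * k + 2 := by omega
    refine ⟨?_, ?_, ?_, ?_⟩
    · rw [Apattern_pat, ha, hb, pat]
      rw [if_neg (show 4 * k + 1 ≠ 0 by omega), if_pos rfl,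
        if_neg (show 4 * k + 1 ≠ 4 * k + 2 by omega)]
      norm_num
    · rw [Apattern_pat, ha, hb, pat]
      rw [if_neg (show 4 * k + 2 ≠ 0 by omega),
        if_neg (show 4 * k + 2 ≠ 4 * k + 1 by omega), if_pos rfl]
      norm_num
    · intro i hi1 hi2 hi3
      rw [Apattern_pat, ha, hb, pat]
      rw [if_neg (show i ≠ 0 by omega), if_neg hi2, if_neg hi3]
      norm_num
    · intro v' t ht
      have hbound : freq v' 1 + freq v' 3 + freq v' 2 ≤ n := by
        have := freq_total v'; omega
      simp only [Apattern_pat, ha, hb] at ht ⊢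
      exact pat_wlp _ _ _ _ (by omega) (by omega) (by omega) (by omega) (by omega) t ht
  · intro hn v hq hf
    have ha : freq v 1 + freq v 3 + 2 * freq v 2 + 1 = 4 * k + 3 := by omega
    have hb : 2 * (freq v 1 + freq v 3) + 2 = 4 * k + 2 := by omega
    refine ⟨?_, ?_, ?_, ?_⟩
    · rw [Apattern_pat, ha, hb, pat]
      rw [if_neg (show 4 * k + 2 ≠ 0 by omega),
        if_neg (show 4 * k + 2 ≠ 4 * k + 3 by omega), if_pos rfl]
      norm_num
    · rw [Apattern_pat, ha, hb, pat]
      rw [if_neg (show 4 * k + 3 ≠ 0 by omega), if_pos rfl,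
        if_neg (show 4 * k + 3 ≠ 4 * k + 2 by omega)]
      norm_num
    · intro i hi1 hi2 hi3
      rw [Apattern_pat, ha, hb, pat]
      rw [if_neg (show i ≠ 0 by omega), if_neg hi3, if_neg hi2]
      norm_num
    · intro v' t ht
      have hbound : freq v' 1 + freq v' 3 + freq v' 2 ≤ n := by
        have := freq_total v'; omega
      simp only [Apattern_pat, ha, hb] at ht ⊢
      exact pat_wlp _ _ _ _ (by omega) (by omega) (by omega) (by omega) (by omega) t ht
end

section
/- Suppose v_n ∈ Z_4^n is the all-ones vector and D_n is the 2^{2n} × (2n+2) Gray-map image of the code generated by (v_n, I_n). For l = 1,2 let s_l = {l, x_2, ..., x_{n+1}} with each x_i ∈ {2i−1, 2i}. If n = 2t+1, then one of |j_{n+1}(s_1; D_n)|, |j_{n+1}(s_2; D_n)| equals 0 and the other equals 2^{3t+2}; if n = 2t, then |j_{n+1}(s_1; D_n)| = |j_{n+1}(s_2; D_n)| = 2^{3t}. -/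
open Finset

local notation "I4" => (Zsqrtd.sqrtd : GaussianInt)

def w (a : ZMod 4) : GaussianInt := I4 ^ a.val

lemma w_add : ∀ a b : ZMod 4, w (a + b) = w a * w b := by decide

lemma re_int_mul (k : ℤ) (z : GaussianInt) : (((k : GaussianInt)) * z).re = k * z.re := by
  simp [Zsqrtd.re_mul]

lemma I_mul_w : ∀ e : ZMod 4, I4 * w e = w (1 + e) := by decide

lemma Ipow : ∀ (k : ℕ) (e : ZMod 4), I4 ^ k * w e = w ((k : ZMod 4) + e) := by
  intro k
  induction k with
  | zero => intro e; simp [w]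
  | succ k ih =>
    intro e
    have : I4 ^ (k + 1) * w e = I4 * (I4 ^ k * w e) := by ring
    rw [this, ih, I_mul_w]
    congr 1
    push_cast
    ring

lemma sq_1pI : (1 + I4) ^ 2 = 2 * I4 := by decide
lemma m_1mI : (1 - I4) * (1 + I4) = 2 := by decide

lemma evenpow (t : ℕ) (e : ZMod 4) :
    (1 - I4) * (1 + I4) ^ (2 * t) * w e
      = ((2 ^ t : ℤ) : GaussianInt) * ((1 - I4) * w ((t : ZMod 4) + e)) := by
  have h1 : (1 + I4) ^ (2 * t) = ((2 : GaussianInt)) ^ t * I4 ^ t := by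
    rw [pow_mul, sq_1pI, mul_pow]
  rw [h1]
  have h2 : (1 - I4) * ((2 : GaussianInt) ^ t * I4 ^ t) * w e
      = (2 : GaussianInt) ^ t * ((1 - I4) * (I4 ^ t * w e)) := by ring
  rw [h2, Ipow]
  push_cast
  ring

lemma oddpow (t : ℕ) (e : ZMod 4) :
    (1 - I4) * (1 + I4) ^ (2 * t + 1) * w e
      = ((2 ^ (t + 1) : ℤ) : GaussianInt) * w ((t : ZMod 4) + e) := by
  have h1 : (1 - I4) * (1 + I4) ^ (2 * t + 1) * w e
      = ((1 - I4) * (1 + I4)) * ((1 + I4) ^ 2) ^ t * w e := by rw [← pow_mul]; ring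
  rw [h1, m_1mI, sq_1pI]
  have h2 : (2 : GaussianInt) * (2 * I4) ^ t * w e
      = ((2 : GaussianInt) * 2 ^ t) * (I4 ^ t * w e) := by rw [mul_pow]; ring
  rw [h2, Ipow]
  push_cast
  ring

lemma dich : ∀ F : ZMod 4,
    (|(w F).re| = 0 ∧ |(w (F + 1)).re| = 1) ∨ (|(w F).re| = 1 ∧ |(w (F + 1)).re| = 0) := by
  decide

lemma absone : ∀ F : ZMod 4, |((1 - I4) * w F).re| = 1 := by decide

lemma sum_gray : ∀ c : Fin 2, ∑ b : ZMod 4, (gray b c : GaussianInt) * w b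
    = 2 * (1 + I4) * w (-((c : ℕ) : ZMod 4)) := by decide

lemma re_sum {α : Type*} (s : Finset α) (f : α → GaussianInt) :
    (∑ b ∈ s, f b).re = ∑ b ∈ s, (f b).re := by
  induction s using Finset.cons_induction with
  | empty => simp
  | cons a s h ih => simp [Finset.sum_cons, Zsqrtd.re_add, ih]

lemma key : ∀ (n : ℕ) (x : Fin n → Fin 2) (l : Fin 2) (a : ZMod 4),
    (∑ u : Fin n → ZMod 4, gray (a + ∑ i, u i) l * ∏ j, gray (u j) (x j))
    = 2 ^ n * Zsqrtd.re ((1 - I4) * (1 + I4) ^ n *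
        w (((l : ℕ) : ZMod 4) + a - ∑ j, ((x j : ℕ) : ZMod 4))) := by
  intro n
  induction n with
  | zero =>
    intro x l a
    simp only [Finset.univ_unique, Finset.sum_const, Finset.prod_empty]
    have : ∀ (l : Fin 2) (a : ZMod 4),
        gray a l = Zsqrtd.re ((1 - I4) * (1 + I4) ^ 0 * w (((l : ℕ) : ZMod 4) + a - 0)) := by
      decide
    simpa using this l a
  | succ n ih =>
    intro x l a
    rw [← Equiv.sum_comp (Fin.consEquiv (fun _ : Fin (n+1) => ZMod 4))]
    rw [Fintype.sum_prod_type]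
    have step : ∀ (b : ZMod 4) (u : Fin n → ZMod 4),
        gray (a + ∑ i, (Fin.consEquiv (fun _ : Fin (n+1) => ZMod 4)) (b, u) i) l *
          ∏ j, gray ((Fin.consEquiv (fun _ : Fin (n+1) => ZMod 4)) (b, u) j) (x j)
        = gray b (x 0) * (gray ((a + b) + ∑ i, u i) l * ∏ j : Fin n, gray (u j) (x j.succ)) := by
      intro b u
      simp only [Fin.consEquiv_apply, Fin.sum_univ_succ, Fin.prod_univ_succ, Fin.cons_zero,
        Fin.cons_succ]
      rw [← add_assoc]
      ring
    simp only [step]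
    have inner : ∀ b : ZMod 4,
        ∑ u : Fin n → ZMod 4, gray b (x 0) * (gray ((a + b) + ∑ i, u i) l * ∏ j : Fin n, gray (u j) (x j.succ))
        = gray b (x 0) * (2 ^ n * Zsqrtd.re ((1 - I4) * (1 + I4) ^ n *
            w (((l : ℕ) : ZMod 4) + (a + b) - ∑ j : Fin n, ((x j.succ : ℕ) : ZMod 4)))) := by
      intro b
      rw [← Finset.mul_sum, ih (fun j => x j.succ) l (a + b)]
    simp only [inner]
    -- now: ∑ b, gray b (x 0) * (2^n * re(Z * w (L + (a+b) - M)))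
    set Z : GaussianInt := (1 - I4) * (1 + I4) ^ n with hZ
    set L : ZMod 4 := ((l : ℕ) : ZMod 4) with hL
    set M : ZMod 4 := ∑ j : Fin n, ((x j.succ : ℕ) : ZMod 4) with hM
    have e1 : ∀ b : ZMod 4, L + (a + b) - M = (L + a - M) + b := by intro b; ring
    have e2 : ∀ b : ZMod 4,
        gray b (x 0) * (2 ^ n * Zsqrtd.re (Z * w (L + (a + b) - M)))
        = 2 ^ n * Zsqrtd.re (((gray b (x 0) : ℤ) : GaussianInt) * (Z * w (L + a - M) * w b)) := by
      intro b
      rw [re_int_mul, e1, w_add]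
      ring_nf
    simp only [e2]
    rw [← Finset.mul_sum, ← re_sum]
    have e3 : ∑ b : ZMod 4, ((gray b (x 0) : ℤ) : GaussianInt) * (Z * w (L + a - M) * w b)
        = Z * w (L + a - M) * ∑ b : ZMod 4, ((gray b (x 0) : ℤ) : GaussianInt) * w b := by
      rw [Finset.mul_sum]; exact Finset.sum_congr rfl fun b _ => by ring
    rw [e3, sum_gray]
    have e4 : Z * w (L + a - M) * (2 * (1 + I4) * w (-(((x 0 : ℕ)) : ZMod 4)))
        = (2 : GaussianInt) * ((1 - I4) * (1 + I4) ^ (n + 1) *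
            w (L + a - ∑ j : Fin (n+1), ((x j : ℕ) : ZMod 4))) := by
      rw [Fin.sum_univ_succ]
      have : L + a - (((x 0 : ℕ) : ZMod 4) + M) = (L + a - M) + -(((x 0 : ℕ)) : ZMod 4) := by ring
      rw [this, w_add, hZ]
      ring
    rw [e4]
    have : ((2 : GaussianInt) * ((1 - I4) * (1 + I4) ^ (n + 1) *
        w (L + a - ∑ j : Fin (n+1), ((x j : ℕ) : ZMod 4)))).re
        = 2 * ((1 - I4) * (1 + I4) ^ (n + 1) *
            w (L + a - ∑ j : Fin (n+1), ((x j : ℕ) : ZMod 4))).re := by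
      have := re_int_mul 2 ((1 - I4) * (1 + I4) ^ (n + 1) *
        w (L + a - ∑ j : Fin (n+1), ((x j : ℕ) : ZMod 4)))
      simpa using this
    rw [this]
    ring

lemma jchar_eq (n : ℕ) (v : Fin n → ZMod 4) (hv : ∀ i, v i = 1) (x : Fin n → Fin 2)
    (l : Fin 2) :
    Jchar (Dv v) (insert ((0 : Fin (n + 1)), l)
        (Finset.univ.image fun j : Fin n => ((j.succ : Fin (n + 1)), x j)))
      = 2 ^ n * Zsqrtd.re ((1 - I4) * (1 + I4) ^ n *
          w (((l : ℕ) : ZMod 4) + 0 - ∑ j, ((x j : ℕ) : ZMod 4))) := by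
  rw [← key n x l 0]
  unfold Jchar
  refine Finset.sum_congr rfl fun u _ => ?_
  rw [Finset.prod_insert, Finset.prod_image]
  · have h0 : Dv v u ((0 : Fin (n + 1)), l) = gray (0 + ∑ i, u i) l := by
      simp [Dv, hv]
    have hj : ∀ j : Fin n, Dv v u ((j.succ : Fin (n + 1)), x j) = gray (u j) (x j) := by
      intro j; simp [Dv]
    rw [h0]
    simp only [hj]
  · intro a _ b _ h
    exact Fin.succ_injective n (congrArg Prod.fst h)
  · intro hmem
    simp only [Finset.mem_image] at hmem
    obtain ⟨j, -, hj2⟩ := hmem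
    exact (Fin.succ_ne_zero j) (congrArg Prod.fst hj2)

/-- Lemma 3: J-characteristics of the sets `s_l = {l, x₂, …, x_{n+1}}`
(`x_i ∈ {2i−1, 2i}`) for the design generated by `(1ₙ, Iₙ)` with `v` the all-ones vector. -/
theorem statement15 (n t : ℕ) (v : Fin n → ZMod 4) (hv : ∀ i, v i = 1)
    (x : Fin n → Fin 2)
    (s : Fin 2 → Finset (Fin (n + 1) × Fin 2))
    (hs : ∀ l, s l = insert ((0 : Fin (n + 1)), l)
      (Finset.univ.image fun j : Fin n => ((j.succ : Fin (n + 1)), x j))) :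
    (n = 2 * t + 1 →
      (|Jchar (Dv v) (s 0)| = 0 ∧ |Jchar (Dv v) (s 1)| = 2 ^ (3 * t + 2)) ∨
      (|Jchar (Dv v) (s 0)| = 2 ^ (3 * t + 2) ∧ |Jchar (Dv v) (s 1)| = 0)) ∧
    (n = 2 * t →
      |Jchar (Dv v) (s 0)| = 2 ^ (3 * t) ∧ |Jchar (Dv v) (s 1)| = 2 ^ (3 * t)) := by
  have hJ : ∀ l : Fin 2, Jchar (Dv v) (s l)
      = 2 ^ n * Zsqrtd.re ((1 - I4) * (1 + I4) ^ n *
          w (((l : ℕ) : ZMod 4) + 0 - ∑ j, ((x j : ℕ) : ZMod 4))) := by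
    intro l; rw [hs l]; exact jchar_eq n v hv x l
  set M : ZMod 4 := ∑ j, ((x j : ℕ) : ZMod 4) with hM
  constructor
  · -- odd case
    intro hn
    subst hn
    have h0 : Jchar (Dv v) (s 0) = 2 ^ (2 * t + 1) *
        (2 ^ (t + 1) * (w ((t : ZMod 4) + ((((0 : Fin 2) : ℕ) : ZMod 4) + 0 - M))).re) := by
      rw [hJ 0, oddpow, re_int_mul]
    have h1 : Jchar (Dv v) (s 1) = 2 ^ (2 * t + 1) *
        (2 ^ (t + 1) * (w ((t : ZMod 4) + ((((1 : Fin 2) : ℕ) : ZMod 4) + 0 - M))).re) := by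
      rw [hJ 1, oddpow, re_int_mul]
    have hexp : (t : ZMod 4) + ((((1 : Fin 2) : ℕ) : ZMod 4) + 0 - M)
        = ((t : ZMod 4) + ((((0 : Fin 2) : ℕ) : ZMod 4) + 0 - M)) + 1 := by push_cast [Fin.val_one, Fin.val_zero]; ring
    set F : ZMod 4 := (t : ZMod 4) + ((((0 : Fin 2) : ℕ) : ZMod 4) + 0 - M) with hF
    rw [hexp] at h1
    have habs : ∀ r : ℤ, |(2 : ℤ) ^ (2 * t + 1) * (2 ^ (t + 1) * r)| = 2 ^ (3 * t + 2) * |r| := by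
      intro r
      rw [abs_mul, abs_mul, abs_pow, abs_pow]
      simp only [abs_two]
      rw [← mul_assoc, ← pow_add]
      congr 2
      ring
    rcases dich F with ⟨ha, hb⟩ | ⟨ha, hb⟩
    · left
      constructor
      · rw [h0, habs, ha, mul_zero]
      · rw [h1, habs, hb, mul_one]
    · right
      constructor
      · rw [h0, habs, ha, mul_one]
      · rw [h1, habs, hb, mul_zero]
  · -- even case
    intro hn
    subst hn
    have habs : ∀ r : ℤ, |(2 : ℤ) ^ (2 * t) * (2 ^ t * r)| = 2 ^ (3 * t) * |r| := by
      intro r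
      rw [abs_mul, abs_mul, abs_pow, abs_pow]
      simp only [abs_two]
      rw [← mul_assoc, ← pow_add]
      congr 2
      ring
    constructor
    · rw [hJ 0, evenpow, re_int_mul, habs, absone, mul_one]
    · rw [hJ 1, evenpow, re_int_mul, habs, absone, mul_one]
end

section
/- Suppose v_n ∈ Z_4^n consists of p ones followed by q twos (p + q = n), and D_n is the 2^{2n} × (2n+2) Gray-map image of the code generated by (v_n, I_n). Then the aliasing index of the column set s_0 = {1, 2, ..., 2p+2} equals 1, i.e., s_0 is a complete word of length 2p+2. -/
open Finset

/-! The two Gray columns of a `Z₄`-coordinate `x` multiply to `(-1)^x`, a character of `Z₄`.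
Hence the product of a row `u` of `Dv v` over `s₀` is `(-1)^(∑ uᵢvᵢ + u₁ + ⋯ + uₚ)`. Since
`vᵢ = 1` for `i ≤ p` and `vᵢ = 2` otherwise, the exponent is `2(u₁ + ⋯ + uₚ)` plus even terms,
so every row product is `1` and `j(s₀; Dv v)` is the number of rows. -/

lemma AddChar.map_sum_eq_prod {ι A M : Type*} [AddCommMonoid A] [CommMonoid M]
    (ψ : AddChar A M) (s : Finset ι) (f : ι → A) :
    ψ (∑ i ∈ s, f i) = ∏ i ∈ s, ψ (f i) := by
  have h := map_prod ψ.toMonoidHom (fun i => Multiplicative.ofAdd (f i)) s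
  rw [← ofAdd_sum] at h
  simpa only [AddChar.toMonoidHom_apply, toAdd_ofAdd] using h

lemma Jchar_eq_card_of_prod_eq_one {I J : Type*} [Fintype I] (D : I → J → ℤ) (s : Finset J)
    (h : ∀ i, ∏ c ∈ s, D i c = 1) : Jchar D s = Fintype.card I := by
  simp [Jchar, h]

lemma rho_eq_one_of_prod_eq_one {I J : Type*} [Fintype I] [Nonempty I] (D : I → J → ℤ)
    (s : Finset J) (h : ∀ i, ∏ c ∈ s, D i c = 1) : rho D s = 1 := by
  have hN : (0 : ℚ) < Fintype.card I := by exact_mod_cast Fintype.card_pos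
  rw [rho, Jchar_eq_card_of_prod_eq_one D s h, Int.cast_natCast, abs_of_pos hN, div_self hN.ne']

lemma Fin.card_filter_val_le {n p : ℕ} (h : p ≤ n) :
    #(univ.filter fun j : Fin (n + 1) => (j : ℕ) ≤ p) = p + 1 := by
  have : (univ.filter fun j : Fin (n + 1) => (j : ℕ) ≤ p)
      = Iic (Fin.castLE (by omega) (last p)) := by
    ext j
    simp [Fin.le_def]
  simp [this]

def parityChar : AddChar (ZMod 4) ℤ where
  toFun x := if x = 0 ∨ x = 2 then 1 else -1
  map_zero_eq_one' := by decide
  map_add_eq_mul' := by decide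

lemma gray_zero_mul_gray_one (x : ZMod 4) : gray x 0 * gray x 1 = parityChar x := by
  revert x; decide

lemma parityChar_mul_self (x : ZMod 4) : parityChar x * parityChar x = 1 := by
  revert x; decide

lemma parityChar_mul_two (x : ZMod 4) : parityChar (x * 2) = 1 := by
  revert x; decide

lemma prod_Dv_product_univ {n : ℕ} (v u : Fin n → ZMod 4) (T : Finset (Fin (n + 1))) :
    ∏ c ∈ T ×ˢ univ, Dv v u c
      = ∏ j ∈ T, parityChar ((Fin.cons (∑ i, u i * v i) u : Fin (n + 1) → ZMod 4) j) := by
  rw [prod_product]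
  refine prod_congr rfl fun j _ => ?_
  rw [Fin.prod_univ_two]
  exact gray_zero_mul_gray_one _

section OnesThenTwos

variable {n p : ℕ} {v : Fin n → ZMod 4}
  (hv1 : ∀ i : Fin n, (i : ℕ) < p → v i = 1) (hv2 : ∀ i : Fin n, p ≤ (i : ℕ) → v i = 2)
include hv1 hv2

lemma parityChar_sum_mul_eq (u : Fin n → ZMod 4) :
    parityChar (∑ i, u i * v i) = ∏ i : Fin n, if (i : ℕ) < p then parityChar (u i) else 1 := by
  rw [AddChar.map_sum_eq_prod]
  refine prod_congr rfl fun i _ => ?_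
  split_ifs with hi
  · rw [hv1 i hi, mul_one]
  · rw [hv2 i (by omega), parityChar_mul_two]

lemma prod_Dv_filter_le_eq_one (u : Fin n → ZMod 4) :
    ∏ c ∈ (univ.filter fun j : Fin (n + 1) => (j : ℕ) ≤ p) ×ˢ univ, Dv v u c = 1 := by
  rw [prod_Dv_product_univ, prod_filter, Fin.prod_univ_succ]
  simp only [Fin.cons_zero, Fin.cons_succ, Fin.val_zero, Nat.zero_le, if_true, Fin.val_succ,
    Nat.succ_le_iff, parityChar_sum_mul_eq hv1 hv2]
  rw [← prod_mul_distrib]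
  refine prod_eq_one fun i _ => ?_
  split_ifs
  · exact parityChar_mul_self _
  · exact mul_one 1

end OnesThenTwos

/-- part of Lemma 4: if `v` consists of `p` ones followed by `q` twos
(`p + q = n`), the column set `s₀ = {1, 2, …, 2p+2}` is a complete word of length `2p+2`,
i.e. it has `2p+2` columns and aliasing index 1. -/
theorem statement16 (n p q : ℕ) (hpq : p + q = n) (v : Fin n → ZMod 4)
    (hv1 : ∀ i : Fin n, (i : ℕ) < p → v i = 1)
    (hv2 : ∀ i : Fin n, p ≤ (i : ℕ) → v i = 2)
    (s0 : Finset (Fin (n + 1) × Fin 2))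
    (hs0 : s0 = Finset.univ.filter fun pc : Fin (n + 1) × Fin 2 => (pc.1 : ℕ) ≤ p) :
    s0.card = 2 * p + 2 ∧ rho (Dv v) s0 = 1 := by
  have hs0_product : s0 = (univ.filter fun j : Fin (n + 1) => (j : ℕ) ≤ p) ×ˢ univ := by
    ext
    simp [hs0]
  rw [hs0_product]
  refine ⟨?_, rho_eq_one_of_prod_eq_one _ _ (prod_Dv_filter_le_eq_one hv1 hv2)⟩
  rw [card_product, Fin.card_filter_val_le (by omega), card_univ, Fintype.card_fin]
  ring
end

section
/- Let D_n be the design generated from G_n = (v_n, I_n) where the last component of v_n is 2, and write D_{n−1} = (a, b, E) for the design generated from (v_{n−1}, I_{n−1}) with v_{n−1} the first n−1 components of v_n. Then, up to row permutations, D_n equals the vertical stack of (a,b,E,1,1), (−a,−b,E,1,−1), (a,b,E,−1,−1), (−a,−b,E,−1,1), and consequently for any subset e of columns of E: j({1, 2n+1, 2n+2} ∪ e; D_n) = 4 j({1} ∪ e; D_{n−1}), j({2, 2n+1, 2n+2} ∪ e; D_n) = 4 j({2} ∪ e; D_{n−1}), and j({1,2} ∪ e; D_n) = 4 j({1,2}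 ∪ e; D_{n−1}). -/
open Finset

lemma gray_key : ∀ (x y : ZMod 4) (c : Fin 2),
    gray (y + x * 2) c = (if x = 1 ∨ x = 3 then -1 else 1) * gray y c := by decide

lemma sign_key : ∀ x : ZMod 4,
    (if x = 1 ∨ x = 3 then (-1:ℤ) else 1) * (gray x 0 * gray x 1) = 1 := by decide

lemma sign_sq (x : ZMod 4) :
    (if x = 1 ∨ x = 3 then (-1:ℤ) else 1) * (if x = 1 ∨ x = 3 then (-1:ℤ) else 1) = 1 := by
  split_ifs <;> norm_num

lemma entry_cast {n : ℕ} (v : Fin (n + 1) → ZMod 4) (hv : v (Fin.last n) = 2)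
    (u : Fin (n + 1) → ZMod 4) (j : Fin (n + 1)) (c : Fin 2) :
    Dv v u (j.castSucc, c) =
      (if (u (Fin.last n) = 1 ∨ u (Fin.last n) = 3) ∧ j = 0 then -1 else 1) *
        Dv (fun i : Fin n => v i.castSucc) (fun i : Fin n => u i.castSucc) (j, c) := by
  induction j using Fin.cases with
  | zero =>
      simp only [Dv, Fin.castSucc_zero, Fin.cons_zero, and_true]
      rw [Fin.sum_univ_castSucc (f := fun i => u i * v i), hv, gray_key]
  | succ k =>
      simp only [Dv, ← Fin.succ_castSucc, Fin.cons_succ, Fin.succ_ne_zero, and_false, if_false,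
        one_mul]

lemma entry_last {n : ℕ} (v : Fin (n + 1) → ZMod 4)
    (u : Fin (n + 1) → ZMod 4) (c : Fin 2) :
    Dv v u (Fin.last (n + 1), c) = gray (u (Fin.last n)) c := by
  simp only [Dv, ← Fin.succ_last, Fin.cons_succ]

lemma snoc_bij {n : ℕ} :
    Function.Bijective (fun p : ZMod 4 × (Fin n → ZMod 4) =>
      (Fin.snoc p.2 p.1 : Fin (n + 1) → ZMod 4)) := by
  apply Function.bijective_iff_has_inverse.mpr
  refine ⟨fun u => (u (Fin.last n), fun i => u i.castSucc), ?_, ?_⟩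
  · intro p; simp
  · intro u; funext i
    induction i using Fin.lastCases with
    | last => simp
    | cast i => simp

private theorem statement17' (n : ℕ) (v : Fin (n + 1) → ZMod 4) (hv : v (Fin.last n) = 2) :
    (∀ e : Finset (Fin (n + 1) × Fin 2), (∀ pc ∈ e, pc.1 ≠ 0) →
      (∀ c : Fin 2,
        Jchar (Dv v)
          (insert ((0 : Fin (n + 2)), c) (insert (Fin.last (n + 1), 0)
            (insert (Fin.last (n + 1), 1)
              (e.image fun pc => (pc.1.castSucc, pc.2))))) =
        4 * Jchar (Dv fun i : Fin n => v i.castSucc)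
          (insert ((0 : Fin (n + 1)), c) e)) ∧
      Jchar (Dv v)
        (insert ((0 : Fin (n + 2)), 0) (insert ((0 : Fin (n + 2)), 1)
          (e.image fun pc => (pc.1.castSucc, pc.2)))) =
      4 * Jchar (Dv fun i : Fin n => v i.castSucc)
        (insert ((0 : Fin (n + 1)), 0) (insert ((0 : Fin (n + 1)), 1) e))) := by
  intro e he
  set v' : Fin n → ZMod 4 := fun i => v i.castSucc with hv'
  set f : Fin (n + 1) × Fin 2 → Fin (n + 2) × Fin 2 :=
    fun pc => (pc.1.castSucc, pc.2) with hf
  -- basic facts about snoc rows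
  have hul : ∀ (x : ZMod 4) (w : Fin n → ZMod 4),
      (Fin.snoc w x : Fin (n+1) → ZMod 4) (Fin.last n) = x := by intro x w; simp
  have huc : ∀ (x : ZMod 4) (w : Fin n → ZMod 4),
      (fun i : Fin n => (Fin.snoc w x : Fin (n+1) → ZMod 4) i.castSucc) = w := by
    intro x w; funext i; simp
  -- entry facts
  have hB : ∀ (x : ZMod 4) (w : Fin n → ZMod 4) (c : Fin 2),
      Dv v (Fin.snoc w x) ((0 : Fin (n+2)), c) =
        (if x = 1 ∨ x = 3 then -1 else 1) * Dv v' w ((0 : Fin (n+1)), c) := by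
    intro x w c
    have := entry_cast v hv (Fin.snoc w x) 0 c
    simpa [hul, huc, hv'] using this
  have hC : ∀ (x : ZMod 4) (w : Fin n → ZMod 4) (pc : Fin (n+1) × Fin 2), pc.1 ≠ 0 →
      Dv v (Fin.snoc w x) (f pc) = Dv v' w pc := by
    intro x w pc hpc
    have := entry_cast v hv (Fin.snoc w x) pc.1 pc.2
    simpa [hul, huc, hv', hf, hpc] using this
  have hL : ∀ (x : ZMod 4) (w : Fin n → ZMod 4) (c : Fin 2),
      Dv v (Fin.snoc w x) (Fin.last (n+1), c) = gray x c := by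
    intro x w c; rw [entry_last, hul]
  -- injectivity of f
  have hfinj : Function.Injective f := by
    intro a b hab
    simp only [hf, Prod.mk.injEq] at hab
    exact Prod.ext (Fin.castSucc_injective _ hab.1) hab.2
  -- membership facts
  have h0img : ∀ c : Fin 2, ((0 : Fin (n+2)), c) ∉ e.image f := by
    intro c hc
    obtain ⟨pc, hpc, hpc2⟩ := Finset.mem_image.mp hc
    have h1 : pc.1.castSucc = 0 := by simpa [hf] using congrArg Prod.fst hpc2
    exact he pc hpc (Fin.castSucc_injective _ (by simpa using h1))
  have hLimg : ∀ c : Fin 2, (Fin.last (n+1), c) ∉ e.image f := by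
    intro c hc
    obtain ⟨pc, hpc, hpc2⟩ := Finset.mem_image.mp hc
    have h1 : pc.1.castSucc = Fin.last (n+1) := by simpa [hf] using congrArg Prod.fst hpc2
    exact absurd h1 (Fin.castSucc_lt_last _).ne
  have h0L : ((0 : Fin (n+2)) : Fin (n+2)) ≠ Fin.last (n+1) := by
    simp [Fin.ext_iff]
  have h0e : ∀ c : Fin 2, ((0 : Fin (n+1)), c) ∉ e := fun c hc => he _ hc rfl
  -- reindex the sum
  have hsum : ∀ s : Finset (Fin (n+2) × Fin 2),
      Jchar (Dv v) s = ∑ x : ZMod 4, ∑ w : Fin n → ZMod 4,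
        ∏ col ∈ s, Dv v (Fin.snoc w x) col := by
    intro s
    rw [Jchar, ← Fintype.sum_bijective _ snoc_bij _ _ (fun p => rfl), Fintype.sum_prod_type]
  constructor
  · intro c
    rw [hsum]
    have key : ∀ (x : ZMod 4) (w : Fin n → ZMod 4),
        ∏ col ∈ insert ((0 : Fin (n+2)), c) (insert (Fin.last (n+1), 0)
            (insert (Fin.last (n+1), 1) (e.image f))), Dv v (Fin.snoc w x) col =
        ∏ col ∈ insert ((0 : Fin (n+1)), c) e, Dv v' w col := by
      intro x w
      rw [Finset.prod_insert (by simp [Prod.ext_iff, h0L, h0img c]),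
        Finset.prod_insert (by simp [Prod.ext_iff, hLimg 0]),
        Finset.prod_insert (hLimg 1),
        Finset.prod_image (fun a ha b hb h => hfinj h),
        Finset.prod_insert (h0e c), hB, hL, hL,
        Finset.prod_congr rfl (fun pc hpc => hC x w pc (he pc hpc))]
      linear_combination (Dv v' w ((0 : Fin (n+1)), c) * ∏ pc ∈ e, Dv v' w pc) * sign_key x
    simp_rw [key]
    rw [Finset.sum_const, Finset.card_univ]
    show (Fintype.card (ZMod 4)) • _ = _
    rw [ZMod.card]
    push_cast [nsmul_eq_mul, Jchar]
    ring
  · rw [hsum]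
    have key : ∀ (x : ZMod 4) (w : Fin n → ZMod 4),
        ∏ col ∈ insert ((0 : Fin (n+2)), 0) (insert ((0 : Fin (n+2)), 1) (e.image f)),
            Dv v (Fin.snoc w x) col =
        ∏ col ∈ insert ((0 : Fin (n+1)), 0) (insert ((0 : Fin (n+1)), 1) e), Dv v' w col := by
      intro x w
      have m1 : ((0 : Fin (n+2)), (0 : Fin 2)) ∉ insert ((0 : Fin (n+2)), (1 : Fin 2)) (e.image f) := by
        intro h
        rcases Finset.mem_insert.mp h with h | h
        · have h2 : (0 : Fin 2) = 1 := congrArg Prod.snd h; exact absurd h2 (by decide)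
        · exact h0img 0 h
      have m2 : ((0 : Fin (n+1)), (0 : Fin 2)) ∉ insert ((0 : Fin (n+1)), (1 : Fin 2)) e := by
        intro h
        rcases Finset.mem_insert.mp h with h | h
        · have h2 : (0 : Fin 2) = 1 := congrArg Prod.snd h; exact absurd h2 (by decide)
        · exact h0e 0 h
      rw [Finset.prod_insert m1,
        Finset.prod_insert (h0img 1),
        Finset.prod_image (fun a ha b hb h => hfinj h),
        Finset.prod_insert m2,
        Finset.prod_insert (h0e 1), hB, hB,
        Finset.prod_congr rfl (fun pc hpc => hC x w pc (he pc hpc))]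
      linear_combination (Dv v' w ((0 : Fin (n+1)), 0) * Dv v' w ((0 : Fin (n+1)), 1) *
        ∏ pc ∈ e, Dv v' w pc) * sign_sq x
    simp_rw [key]
    rw [Finset.sum_const, Finset.card_univ]
    show (Fintype.card (ZMod 4)) • _ = _
    rw [ZMod.card]
    push_cast [nsmul_eq_mul, Jchar]
    ring


/-- Lemma 2 and display (5): if the last entry of `v` is 2 then, up to the
row correspondence `u ↦ (u(last), u|_{first n})`, `Dₙ` is the four-fold stack
`(a,b,E,1,1), (−a,−b,E,1,−1), (a,b,E,−1,−1), (−a,−b,E,−1,1)` over `D_{n−1} = (a,b,E)`,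
and consequently `j({1,2n+1,2n+2} ∪ e; Dₙ) = 4 j({1} ∪ e; D_{n−1})`,
`j({2,2n+1,2n+2} ∪ e; Dₙ) = 4 j({2} ∪ e; D_{n−1})` and
`j({1,2} ∪ e; Dₙ) = 4 j({1,2} ∪ e; D_{n−1})` for every set `e` of columns of `E`. -/
theorem statement17 (n : ℕ) (v : Fin (n + 1) → ZMod 4) (hv : v (Fin.last n) = 2) :
    -- row correspondence giving the four-fold stack, up to row permutation
    (Function.Bijective fun u : Fin (n + 1) → ZMod 4 =>
      (u (Fin.last n), fun i : Fin n => u i.castSucc)) ∧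
    -- entries of D_n in terms of D_{n-1}: columns (a,b,E) with sign flips on (a,b)
    (∀ (u : Fin (n + 1) → ZMod 4) (j : Fin (n + 1)) (c : Fin 2),
      Dv v u (j.castSucc, c) =
        (if (u (Fin.last n) = 1 ∨ u (Fin.last n) = 3) ∧ j = 0 then -1 else 1) *
          Dv (fun i : Fin n => v i.castSucc) (fun i : Fin n => u i.castSucc) (j, c)) ∧
    -- last two columns of D_n are (1,1), (1,−1), (−1,−1), (−1,1) on the four blocks
    (∀ (u : Fin (n + 1) → ZMod 4) (c : Fin 2),
      Dv v u (Fin.last (n + 1), c) = gray (u (Fin.last n)) c) ∧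
    -- the three J-characteristic identities of Lemma 2(a)-(c)
    (∀ e : Finset (Fin (n + 1) × Fin 2), (∀ pc ∈ e, pc.1 ≠ 0) →
      (∀ c : Fin 2,
        Jchar (Dv v)
          (insert ((0 : Fin (n + 2)), c) (insert (Fin.last (n + 1), 0)
            (insert (Fin.last (n + 1), 1)
              (e.image fun pc => (pc.1.castSucc, pc.2))))) =
        4 * Jchar (Dv fun i : Fin n => v i.castSucc)
          (insert ((0 : Fin (n + 1)), c) e)) ∧
      Jchar (Dv v)
        (insert ((0 : Fin (n + 2)), 0) (insert ((0 : Fin (n + 2)), 1)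
          (e.image fun pc => (pc.1.castSucc, pc.2)))) =
      4 * Jchar (Dv fun i : Fin n => v i.castSucc)
        (insert ((0 : Fin (n + 1)), 0) (insert ((0 : Fin (n + 1)), 1) e))) := by
  refine ⟨?_, entry_cast v hv, entry_last v, statement17' n v hv⟩
  apply Function.bijective_iff_has_inverse.mpr
  refine ⟨fun p => Fin.snoc p.2 p.1, ?_, ?_⟩
  · intro u; funext i
    induction i using Fin.lastCases with
    | last => simp
    | cast i => simp
  · intro p; simp
end
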